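/- arXiv:0904.2753 — 9 statements merged into one kernel-verified Lean document; each statement's English description precedes it below -/
import Mathlib

section
/- Let S be a finite set with m = |S|, let N ≥ 0 be an integer, and let σ ∈ D(S, N). Then the subspace of Conf(S) consisting of all configurations p satisfying conditions (C1) and (C2) is a contractible topological space. -/
/-!
Two distinct letters of `σ` are either nested (an occurrence of one lies strictly between two
occurrences of the other) or separated (every occurrence of one precedes every occurrence of the
other), so (C1) and (C2) already force a configuration to be injective. Strengthening (C2) to
"separated letters are ordered by `y`, whatever their `x`" gives a convex subset `Y`, nonempty
because condition (II) makes spans of nested letters strictly nested, so that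
`s ↦ (last(s) - first(s), first(s))` lies in `Y`. Raising every `y_s` by `c · first(s)` preserves
(C1) and (C2) for `c ≥ 0` and lands in `Y` as soon as `c` exceeds the spread of the
`y`-coordinates; this homotopes the identity into the contractible space `Y`.
-/

/-- The configuration space `Conf S`: the set of injective maps (configurations)
`p : S → ℝ × ℝ`, as a subset of the product space `S → ℝ × ℝ`. -/
def Conf (S : Type*) : Set (S → ℝ × ℝ) := {p | Function.Injective p}

/-- Condition (I) on a surjection `σ`: consecutive values are distinct. -/
def CondI {S : Type*} {k : ℕ} (σ : Fin k → S) : Prop :=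
  ∀ i j : Fin k, (j : ℕ) = (i : ℕ) + 1 → σ i ≠ σ j

/-- Condition (II): no interleaving pattern `i₁ < j₁ < i₂ < j₂` with
`i₁, i₂ ∈ σ⁻¹(s)` and `j₁, j₂ ∈ σ⁻¹(s')` for `s ≠ s'`. -/
def CondII {S : Type*} {k : ℕ} (σ : Fin k → S) : Prop :=
  ¬ ∃ (s s' : S) (i₁ j₁ i₂ j₂ : Fin k),
      s ≠ s' ∧ i₁ < j₁ ∧ j₁ < i₂ ∧ i₂ < j₂ ∧
      σ i₁ = s ∧ σ i₂ = s ∧ σ j₁ = s' ∧ σ j₂ = s'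

/-- `σ ∈ D(S, N)`: a surjection `σ : {1, …, N + |S|} → S` satisfying (I) and (II).
(The condition `k = N + |S|` is imposed as a separate hypothesis in the theorems.) -/
def MemD {S : Type*} {k : ℕ} (σ : Fin k → S) : Prop :=
  Function.Surjective σ ∧ CondI σ ∧ CondII σ

/-- Condition (C1) on a configuration `p`: if some element of `σ⁻¹(s)` lies strictly
between two elements of `σ⁻¹(s')` (for `s ≠ s'`) then `x_s < x_{s'}`. -/
def CondC1 {S : Type*} {k : ℕ} (σ : Fin k → S) (p : S → ℝ × ℝ) : Prop :=
  ∀ s s' : S, s ≠ s' →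
    (∃ i j₁ j₂ : Fin k, σ i = s ∧ σ j₁ = s' ∧ σ j₂ = s' ∧ j₁ < i ∧ i < j₂) →
    (p s).1 < (p s').1

/-- Condition (C2) on a configuration `p`: if `x_s = x_{s'}` (for `s ≠ s'`) and every
element of `σ⁻¹(s)` is smaller than every element of `σ⁻¹(s')` then `y_s < y_{s'}`. -/
def CondC2 {S : Type*} {k : ℕ} (σ : Fin k → S) (p : S → ℝ × ℝ) : Prop :=
  ∀ s s' : S, s ≠ s' → (p s).1 = (p s').1 →
    (∀ i j : Fin k, σ i = s → σ j = s' → i < j) →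
    (p s).2 < (p s').2

theorem ContractibleSpace.of_homotopic_id_comp {X Y : Type*} [TopologicalSpace X]
    [TopologicalSpace Y] [ContractibleSpace Y] (r : C(X, Y)) (i : C(Y, X))
    (h : (ContinuousMap.id X).Homotopic (i.comp r)) : ContractibleSpace X := by
  rw [contractible_iff_id_nullhomotopic]
  obtain ⟨x, hx⟩ := ((id_nullhomotopic Y).comp_right i).comp_left r
  exact ⟨x, h.trans hx⟩

namespace Conf

open Finset

variable {S : Type*} {k : ℕ} {σ : Fin k → S} {s s' : S}

def Nested (σ : Fin k → S) (s s' : S) : Prop :=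
  ∃ i j₁ j₂ : Fin k, σ i = s ∧ σ j₁ = s' ∧ σ j₂ = s' ∧ j₁ < i ∧ i < j₂

def Precedes (σ : Fin k → S) (s s' : S) : Prop :=
  ∀ i j : Fin k, σ i = s → σ j = s' → i < j

theorem exists_lt_of_not_precedes (hne : s ≠ s') (h : ¬ Precedes σ s s') :
    ∃ i j : Fin k, σ i = s ∧ σ j = s' ∧ j < i := by
  simp only [Precedes, not_forall, not_lt] at h
  obtain ⟨i, j, hi, hj, hji⟩ := h
  exact ⟨i, j, hi, hj, hji.lt_of_ne fun hij => hne (hi ▸ hj ▸ congrArg σ hij.symm)⟩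

theorem nested_or_nested_or_precedes_or_precedes (hne : s ≠ s') :
    Nested σ s s' ∨ Nested σ s' s ∨ Precedes σ s s' ∨ Precedes σ s' s := by
  by_cases h₁ : Precedes σ s s'
  · exact .inr (.inr (.inl h₁))
  by_cases h₂ : Precedes σ s' s
  · exact .inr (.inr (.inr h₂))
  obtain ⟨i, j, hi, hj, hji⟩ := exists_lt_of_not_precedes hne h₁
  obtain ⟨i', j', hi', hj', hji'⟩ := exists_lt_of_not_precedes hne.symm h₂
  rcases lt_trichotomy j j' with hlt | heq | hgt
  · exact .inl ⟨j', j, i', hj', hj, hi', hlt, hji'⟩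
  · exact absurd (hj' ▸ hj ▸ congrArg σ heq.symm) hne
  · exact .inr (.inl ⟨j, j', i, hj, hj', hi, hgt, hji⟩)

section Occurrences

open Classical in
noncomputable def occurrences (σ : Fin k → S) (s : S) : Finset (Fin k) :=
  univ.filter (σ · = s)

theorem mem_occurrences {i : Fin k} : i ∈ occurrences σ s ↔ σ i = s := by
  simp [occurrences]

variable (hσ : Function.Surjective σ)
include hσ

theorem occurrences_nonempty (s : S) : (occurrences σ s).Nonempty :=
  let ⟨i, hi⟩ := hσ s
  ⟨i, mem_occurrences.2 hi⟩

noncomputable def firstOcc (s : S) : Fin k := (occurrences σ s).min' (occurrences_nonempty hσ s)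

noncomputable def lastOcc (s : S) : Fin k := (occurrences σ s).max' (occurrences_nonempty hσ s)

theorem apply_firstOcc (s : S) : σ (firstOcc hσ s) = s :=
  mem_occurrences.1 (min'_mem _ _)

theorem apply_lastOcc (s : S) : σ (lastOcc hσ s) = s :=
  mem_occurrences.1 (max'_mem _ _)

theorem firstOcc_le {i : Fin k} (hi : σ i = s) : firstOcc hσ s ≤ i :=
  min'_le _ _ (mem_occurrences.2 hi)

theorem le_lastOcc {i : Fin k} (hi : σ i = s) : i ≤ lastOcc hσ s :=
  le_max' _ _ (mem_occurrences.2 hi)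

theorem firstOcc_injective : Function.Injective (firstOcc hσ) := fun s s' h => by
  rw [← apply_firstOcc hσ s, h, apply_firstOcc hσ s']

theorem lastOcc_injective : Function.Injective (lastOcc hσ) := fun s s' h => by
  rw [← apply_lastOcc hσ s, h, apply_lastOcc hσ s']

theorem Precedes.firstOcc_lt (h : Precedes σ s s') : firstOcc hσ s < firstOcc hσ s' :=
  h _ _ (apply_firstOcc hσ s) (apply_firstOcc hσ s')

theorem Nested.firstOcc_lt (hII : CondII σ) (hne : s ≠ s') (h : Nested σ s s') :
    firstOcc hσ s' < firstOcc hσ s := by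
  obtain ⟨i, j₁, j₂, hi, hj₁, hj₂, h₁, h₂⟩ := h
  refine ((firstOcc_injective hσ).ne hne).lt_or_gt.resolve_left fun hlt => hII ?_
  exact ⟨s, s', firstOcc hσ s, j₁, i, j₂, hne, hlt.trans_le (firstOcc_le hσ hj₁), h₁, h₂,
    apply_firstOcc hσ s, hi, hj₁, hj₂⟩

theorem Nested.lastOcc_lt (hII : CondII σ) (hne : s ≠ s') (h : Nested σ s s') :
    lastOcc hσ s < lastOcc hσ s' := by
  obtain ⟨i, j₁, j₂, hi, hj₁, hj₂, h₁, h₂⟩ := h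
  refine ((lastOcc_injective hσ).ne hne).lt_or_gt.resolve_right fun hgt => hII ?_
  exact ⟨s', s, j₁, i, j₂, lastOcc hσ s, hne.symm, h₁, h₂, (le_lastOcc hσ hj₂).trans_lt hgt,
    hj₁, hj₂, hi, apply_lastOcc hσ s⟩

end Occurrences

section Geometry

def admissible (σ : Fin k → S) : Set (S → ℝ × ℝ) :=
  {p | p ∈ Conf S ∧ CondC1 σ p ∧ CondC2 σ p}

def core (σ : Fin k → S) : Set (S → ℝ × ℝ) :=
  {p | CondC1 σ p ∧ ∀ s s', s ≠ s' → Precedes σ s s' → (p s).2 < (p s').2}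

theorem injective_of_condC1_of_condC2 {p : S → ℝ × ℝ} (h₁ : CondC1 σ p) (h₂ : CondC2 σ p) :
    Function.Injective p := by
  intro s s' hp
  by_contra hne
  have hx : (p s).1 = (p s').1 := congrArg Prod.fst hp
  have hy : (p s).2 = (p s').2 := congrArg Prod.snd hp
  rcases nested_or_nested_or_precedes_or_precedes (σ := σ) hne with h | h | h | h
  · exact (h₁ s s' hne h).ne hx
  · exact (h₁ s' s (Ne.symm hne) h).ne hx.symm
  · exact (h₂ s s' hne hx h).ne hy
  · exact (h₂ s' s (Ne.symm hne) hx.symm h).ne hy.symm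

theorem mem_admissible {p : S → ℝ × ℝ} (h₁ : CondC1 σ p) (h₂ : CondC2 σ p) :
    p ∈ admissible σ :=
  ⟨injective_of_condC1_of_condC2 h₁ h₂, h₁, h₂⟩

theorem core_subset_admissible : core σ ⊆ admissible σ := fun _ ⟨h₁, h₂⟩ =>
  mem_admissible h₁ fun s s' hne _ h => h₂ s s' hne h

theorem convex_core : Convex ℝ (core σ) := by
  rintro p ⟨hp₁, hp₂⟩ q ⟨hq₁, hq₂⟩ a b ha hb hab
  have combo {u u' v v' : ℝ} (hu : u < u') (hv : v < v') : a * u + b * v < a * u' + b * v' := by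
    rcases ha.eq_or_lt with rfl | ha
    · simp_all
    · exact add_lt_add_of_lt_of_le (mul_lt_mul_of_pos_left hu ha)
        (mul_le_mul_of_nonneg_left hv.le hb)
  exact ⟨fun s s' hne h => combo (hp₁ s s' hne h) (hq₁ s s' hne h),
    fun s s' hne h => combo (hp₂ s s' hne h) (hq₂ s s' hne h)⟩

noncomputable def spanConfig (hσ : Function.Surjective σ) (s : S) : ℝ × ℝ :=
  (((lastOcc hσ s : ℕ) : ℝ) - (firstOcc hσ s : ℕ), (firstOcc hσ s : ℕ))

theorem spanConfig_mem_core (hσ : Function.Surjective σ) (hII : CondII σ) :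
    spanConfig hσ ∈ core σ := by
  refine ⟨fun s s' hne h => ?_, fun s s' _ h => ?_⟩
  · have hfirst : ((firstOcc hσ s' : ℕ) : ℝ) < (firstOcc hσ s : ℕ) := by
      exact_mod_cast Nested.firstOcc_lt hσ hII hne h
    have hlast : ((lastOcc hσ s : ℕ) : ℝ) < (lastOcc hσ s' : ℕ) := by
      exact_mod_cast Nested.lastOcc_lt hσ hII hne h
    simp only [spanConfig]
    linarith
  · simp only [spanConfig]
    exact_mod_cast h.firstOcc_lt hσ

def shiftY (w : S → ℝ) (c : ℝ) (p : S → ℝ × ℝ) : S → ℝ × ℝ :=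
  fun s => ((p s).1, (p s).2 + c * w s)

theorem shiftY_zero (w : S → ℝ) (p : S → ℝ × ℝ) : shiftY w 0 p = p := by
  funext s
  simp [shiftY]

theorem continuous_shiftY (w : S → ℝ) :
    Continuous fun x : ℝ × (S → ℝ × ℝ) => shiftY w x.1 x.2 := by
  unfold shiftY
  fun_prop

theorem shiftY_mem_admissible {w : S → ℝ} (hw : ∀ s s', Precedes σ s s' → w s ≤ w s')
    {c : ℝ} (hc : 0 ≤ c) {p : S → ℝ × ℝ} (hp : p ∈ admissible σ) :
    shiftY w c p ∈ admissible σ := by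
  refine mem_admissible hp.2.1 fun s s' hne hx h => ?_
  have hy := hp.2.2 s s' hne hx h
  have hws := hw s s' h
  simp only [shiftY]
  nlinarith

theorem shiftY_mem_core {w : S → ℝ} (hw : ∀ s s', Precedes σ s s' → w s + 1 ≤ w s')
    {c : ℝ} {p : S → ℝ × ℝ} (hc : ∀ s s', (p s).2 - (p s').2 < c) (hp : CondC1 σ p) :
    shiftY w c p ∈ core σ := by
  refine ⟨hp, fun s s' _ h => ?_⟩
  have hws := hw s s' h
  have hcs := hc s s'
  have hc₀ := hc s s
  simp only [shiftY]
  nlinarith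

variable [Fintype S]

noncomputable def yBound (p : S → ℝ × ℝ) : ℝ :=
  1 + ∑ a, ∑ b, |(p a).2 - (p b).2|

theorem sub_lt_yBound (p : S → ℝ × ℝ) (s s' : S) : (p s).2 - (p s').2 < yBound p := by
  have hs' : |(p s).2 - (p s').2| ≤ ∑ b, |(p s).2 - (p b).2| :=
    single_le_sum (f := fun b => |(p s).2 - (p b).2|) (fun _ _ => abs_nonneg _) (mem_univ s')
  have hs : ∑ b, |(p s).2 - (p b).2| ≤ ∑ a, ∑ b, |(p a).2 - (p b).2| :=
    single_le_sum (f := fun a => ∑ b, |(p a).2 - (p b).2|)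
      (fun _ _ => sum_nonneg fun _ _ => abs_nonneg _) (mem_univ s)
  have := le_abs_self ((p s).2 - (p s').2)
  simp only [yBound]
  linarith

theorem yBound_pos (p : S → ℝ × ℝ) : 0 < yBound p := by
  unfold yBound
  positivity

theorem continuous_yBound : Continuous (yBound (S := S)) := by
  unfold yBound
  fun_prop

theorem contractibleSpace_admissible (hσ : Function.Surjective σ) (hII : CondII σ) :
    ContractibleSpace (admissible σ) := by
  have : ContractibleSpace (core σ) :=
    convex_core.contractibleSpace ⟨_, spanConfig_mem_core hσ hII⟩
  let w : S → ℝ := fun s => (firstOcc hσ s : ℕ)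
  have hw (s s' : S) (h : Precedes σ s s') : w s + 1 ≤ w s' := by
    simp only [w]
    exact_mod_cast h.firstOcc_lt hσ
  have hcont : Continuous fun x : ℝ × admissible σ => shiftY w (x.1 * yBound x.2.1) x.2.1 := by
    refine (continuous_shiftY w).comp (.prodMk ?_ (by fun_prop))
    exact continuous_fst.mul (continuous_yBound.comp (by fun_prop))
  let toCore : C(admissible σ, core σ) :=
    ⟨fun p => ⟨shiftY w (yBound p.1) p.1, shiftY_mem_core hw (sub_lt_yBound p.1) p.2.2.1⟩,
      ((continuous_shiftY w).comp ((continuous_yBound.comp continuous_subtype_val).prodMk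
        continuous_subtype_val)).subtype_mk _⟩
  refine .of_homotopic_id_comp toCore ⟨_, continuous_inclusion core_subset_admissible⟩
    ⟨{ toFun x := ⟨shiftY w (x.1 * yBound x.2.1) x.2.1, shiftY_mem_admissible
          (fun s s' h => by linarith [hw s s' h])
          (mul_nonneg x.1.2.1 (yBound_pos _).le) x.2.2⟩
       continuous_toFun := (hcont.comp (continuous_subtype_val.prodMap continuous_id)).subtype_mk _
       map_zero_left p := by simp [shiftY_zero]
       map_one_left p := by simp [toCore] }⟩

end Geometry

end Conf

theorem statement0_general {S : Type*} [Fintype S] (k : ℕ)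
    (σ : Fin k → S) (hσ : MemD σ) :
    ContractibleSpace {p : S → ℝ × ℝ // p ∈ Conf S ∧ CondC1 σ p ∧ CondC2 σ p} :=
  Conf.contractibleSpace_admissible hσ.1 hσ.2.2

/-- For a finite set `S`, `N ≥ 0` and `σ ∈ D(S, N)`, the subspace of
`Conf(S)` of configurations satisfying (C1) and (C2) is contractible. -/
theorem statement0 {S : Type*} [Fintype S] (N k : ℕ)
    (hk : k = N + Fintype.card S) (σ : Fin k → S) (hσ : MemD σ) :
    ContractibleSpace {p : S → ℝ × ℝ // p ∈ Conf S ∧ CondC1 σ p ∧ CondC2 σ p} :=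
  statement0_general k σ hσ
end

section
/- Let S = S_c ⊔ S_a be an SC set with m = |S|, let N ≥ 0 be an integer, and let σ ∈ D(S, N) additionally satisfy condition (III). Then the subspace of Conf(S) consisting of all configurations p satisfying conditions (C1), (C2) and (C3) is a contractible topological space. -/
/-- Condition (C3) for an SC set `S = S_c ⊔ S_a` (here `Sa ⊆ S` and `S_c = Saᶜ`):
`x_s = 0` for `s ∈ S_a` and `x_s > 0` for `s ∈ S_c`. -/
def CondC3 {S : Type*} (Sa : Set S) (p : S → ℝ × ℝ) : Prop :=
  (∀ s ∈ Sa, (p s).1 = 0) ∧ (∀ s ∉ Sa, 0 < (p s).1)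

/-- Condition (III): `σ⁻¹(s)` is a one-element set for every `s ∈ S_a`. -/
def CondIII {S : Type*} {k : ℕ} (Sa : Set S) (σ : Fin k → S) : Prop :=
  ∀ s ∈ Sa, ∃! i : Fin k, σ i = s
/-!
The canonical configuration puts `s` at height `y*_s` = its first position in `σ` and at
abscissa `x*_s` = one plus the span between its first and last positions if `s ∈ S_c`, and
`x*_s = 0` if `s ∈ S_a`. By (II), an `s` nested inside `s'` lies entirely between two occurrences
of `s'`, so its span is strictly smaller; by (III) nothing is nested inside a symbol of `S_a`.
This gives (C1), and (C2) holds because `y*` orders the symbols by first occurrence. Given (C1)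
and (C2), injectivity is automatic: two symbols with the same abscissa are not nested, so one
precedes the other and (C2) separates them.

Every admissible `p` is deformed to the canonical one in two straight-line stages. First only
the heights move, to `y*`: abscissae stay put, so (C1) and (C3) persist, and (C2) is a strict
inequality between heights satisfied at both ends. Then, with heights frozen at `y*`, the
abscissae move to `x*`: (C2) now holds for free, and (C1), (C3) are strict linear inequalities
satisfied at both ends.
-/

theorem ContinuousMap.Homotopic.of_segment_subset {X E : Type*} [TopologicalSpace X]
    [AddCommGroup E] [TopologicalSpace E] [IsTopologicalAddGroup E] [Module ℝ E]
    [ContinuousSMul ℝ E] {P : Set E} {f g : C(X, P)}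
    (h : ∀ x, segment ℝ (f x : E) (g x) ⊆ P) : f.Homotopic g := by
  let ι : C(P, E) := ⟨Subtype.val, continuous_subtype_val⟩
  let F := ContinuousMap.Homotopy.affine (ι.comp f) (ι.comp g)
  refine ⟨{ toFun := fun x => ⟨F x, h x.2 ?_⟩
            continuous_toFun := F.continuous.subtype_mk _
            map_zero_left := fun x => Subtype.ext (F.apply_zero x)
            map_one_left := fun x => Subtype.ext (F.apply_one x) }⟩
  rw [← Path.range_segment]
  exact Set.mem_range_self x.1

lemma combo_lt_combo {α β a a' b b' : ℝ} (hα : 0 ≤ α) (hβ : 0 ≤ β) (hαβ : α + β = 1)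
    (ha : a < a') (hb : b < b') : α * a + β * b < α * a' + β * b' := by
  rcases hα.eq_or_lt with rfl | hα
  · simp_all
  · exact add_lt_add_of_lt_of_le (by gcongr) (by gcongr)

lemma smul_add_smul_apply {S : Type*} (α β : ℝ) (p q : S → ℝ × ℝ) (s : S) :
    (α • p + β • q) s = (α * (p s).1 + β * (q s).1, α * (p s).2 + β * (q s).2) :=
  rfl

section

variable {S : Type*} {k : ℕ}

def Nested (σ : Fin k → S) (s s' : S) : Prop :=
  ∃ i j₁ j₂ : Fin k, σ i = s ∧ σ j₁ = s' ∧ σ j₂ = s' ∧ j₁ < i ∧ i < j₂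

def Precedes (σ : Fin k → S) (s s' : S) : Prop :=
  ∀ i j : Fin k, σ i = s → σ j = s' → i < j

lemma Nested.exists_lt_and_exists_gt {σ : Fin k → S} (hII : CondII σ) {s s' : S}
    (hne : s ≠ s') (h : Nested σ s s') {i : Fin k} (hi : σ i = s) :
    (∃ a, σ a = s' ∧ a < i) ∧ ∃ b, σ b = s' ∧ i < b := by
  obtain ⟨i₀, j₁, j₂, hi₀, hj₁, hj₂, hj₁i₀, hi₀j₂⟩ := h
  constructor
  · refine ⟨j₁, hj₁, lt_of_not_ge fun hij₁ => hII ?_⟩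
    have hij₁ : i < j₁ := hij₁.lt_of_ne (by rintro rfl; exact hne (hi.symm.trans hj₁))
    exact ⟨s, s', i, j₁, i₀, j₂, hne, hij₁, hj₁i₀, hi₀j₂, hi, hi₀, hj₁, hj₂⟩
  · refine ⟨j₂, hj₂, lt_of_not_ge fun hj₂i => hII ?_⟩
    have hj₂i : j₂ < i := hj₂i.lt_of_ne (by rintro rfl; exact hne (hi.symm.trans hj₂))
    exact ⟨s', s, j₁, i₀, j₂, i, hne.symm, hj₁i₀, hi₀j₂, hj₂i, hj₁, hj₂, hi₀, hi⟩

lemma Nested.not_existsUnique {σ : Fin k → S} {s s' : S} (h : Nested σ s s') :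
    ¬ ∃! i, σ i = s' := by
  rintro ⟨i, -, hunique⟩
  obtain ⟨_, j₁, j₂, -, hj₁, hj₂, hj₁i, hij₂⟩ := h
  exact (hj₁i.trans hij₂).ne ((hunique j₁ hj₁).trans (hunique j₂ hj₂).symm)

lemma precedes_or_precedes_of_not_nested {σ : Fin k → S} {s s' : S} (hne : s ≠ s')
    (h : ¬ Nested σ s s') (h' : ¬ Nested σ s' s) : Precedes σ s s' ∨ Precedes σ s' s := by
  by_contra! hcon
  simp only [Precedes, not_forall, not_lt] at hcon
  obtain ⟨⟨i, j, hi, hj, hji⟩, ⟨j', i', hj', hi', hi'j'⟩⟩ := hcon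
  have hji : j < i := hji.lt_of_ne (by rintro rfl; exact hne (hi.symm.trans hj))
  have hi'j' : i' < j' := hi'j'.lt_of_ne (by rintro rfl; exact hne (hi'.symm.trans hj'))
  rcases lt_trichotomy i j' with hij' | rfl | hj'i
  · exact h ⟨i, j, j', hi, hj, hj', hji, hij'⟩
  · exact hne (hi.symm.trans hj')
  · exact h' ⟨j', i', i, hj', hi', hi, hi'j', hj'i⟩

lemma injective_of_condC1_of_condC2 {σ : Fin k → S} {p : S → ℝ × ℝ}
    (hC1 : CondC1 σ p) (hC2 : CondC2 σ p) : Function.Injective p := by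
  intro s s' hss'
  by_contra hne
  have hx : (p s).1 = (p s').1 := congrArg Prod.fst hss'
  have hy : (p s).2 = (p s').2 := congrArg Prod.snd hss'
  rcases precedes_or_precedes_of_not_nested hne (fun hn => (hC1 s s' hne hn).ne hx)
      (fun hn => (hC1 s' s (Ne.symm hne) hn).ne hx.symm) with hpre | hpre
  · exact (hC2 s s' hne hx hpre).ne hy
  · exact (hC2 s' s (Ne.symm hne) hx.symm hpre).ne hy.symm

def positions (σ : Fin k → S) (s : S) : Set ℕ :=
  (↑) '' (σ ⁻¹' {s})

noncomputable def firstIndex (σ : Fin k → S) (s : S) : ℕ :=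
  sInf (positions σ s)

noncomputable def lastIndex (σ : Fin k → S) (s : S) : ℕ :=
  sSup (positions σ s)

section Indices

variable {σ : Fin k → S}

lemma bddAbove_positions (s : S) : BddAbove (positions σ s) :=
  ⟨k, by rintro _ ⟨i, -, rfl⟩; exact i.2.le⟩

lemma firstIndex_le {s : S} {i : Fin k} (hi : σ i = s) : firstIndex σ s ≤ i :=
  Nat.sInf_le ⟨i, hi, rfl⟩

lemma le_lastIndex {s : S} {i : Fin k} (hi : σ i = s) : (i : ℕ) ≤ lastIndex σ s :=
  le_csSup (bddAbove_positions s) ⟨i, hi, rfl⟩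

lemma exists_eq_firstIndex (hσ : Function.Surjective σ) (s : S) :
    ∃ i, σ i = s ∧ (i : ℕ) = firstIndex σ s := by
  obtain ⟨i, hi⟩ := hσ s
  exact Nat.sInf_mem (s := positions σ s) ⟨i, i, hi, rfl⟩

lemma exists_eq_lastIndex (hσ : Function.Surjective σ) (s : S) :
    ∃ i, σ i = s ∧ (i : ℕ) = lastIndex σ s := by
  obtain ⟨i, hi⟩ := hσ s
  exact Nat.sSup_mem (s := positions σ s) ⟨i, i, hi, rfl⟩ (bddAbove_positions s)

lemma firstIndex_le_lastIndex (hσ : Function.Surjective σ) (s : S) :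
    firstIndex σ s ≤ lastIndex σ s := by
  obtain ⟨i, hi, hfirst⟩ := exists_eq_firstIndex hσ s
  exact hfirst ▸ le_lastIndex hi

lemma Precedes.firstIndex_lt (hσ : Function.Surjective σ) {s s' : S} (h : Precedes σ s s') :
    firstIndex σ s < firstIndex σ s' := by
  obtain ⟨i, hi, hfirst⟩ := exists_eq_firstIndex hσ s
  obtain ⟨j, hj, hfirst'⟩ := exists_eq_firstIndex hσ s'
  rw [← hfirst, ← hfirst']
  exact h i j hi hj

lemma Nested.firstIndex_lt_and_lastIndex_lt (hσ : Function.Surjective σ) (hII : CondII σ)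
    {s s' : S} (hne : s ≠ s') (h : Nested σ s s') :
    firstIndex σ s' < firstIndex σ s ∧ lastIndex σ s < lastIndex σ s' := by
  obtain ⟨i, hi, hfirst⟩ := exists_eq_firstIndex hσ s
  obtain ⟨j, hj, hlast⟩ := exists_eq_lastIndex hσ s
  obtain ⟨⟨a, ha, hai⟩, -⟩ := h.exists_lt_and_exists_gt hII hne hi
  obtain ⟨-, ⟨b, hb, hjb⟩⟩ := h.exists_lt_and_exists_gt hII hne hj
  exact ⟨hfirst ▸ (firstIndex_le ha).trans_lt hai,
    hlast ▸ (Fin.lt_def.mp hjb).trans_le (le_lastIndex hb)⟩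

end Indices

def admissibleConf (Sa : Set S) (σ : Fin k → S) : Set (S → ℝ × ℝ) :=
  {p | p ∈ Conf S ∧ CondC1 σ p ∧ CondC2 σ p ∧ CondC3 Sa p}

lemma mem_admissibleConf_of_conds {Sa : Set S} {σ : Fin k → S} {p : S → ℝ × ℝ}
    (hC1 : CondC1 σ p) (hC2 : CondC2 σ p) (hC3 : CondC3 Sa p) : p ∈ admissibleConf Sa σ :=
  ⟨injective_of_condC1_of_condC2 hC1 hC2, hC1, hC2, hC3⟩

open Classical in
noncomputable def canonicalX (Sa : Set S) (σ : Fin k → S) (s : S) : ℝ :=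
  if s ∈ Sa then 0 else (lastIndex σ s : ℝ) - firstIndex σ s + 1

noncomputable def withFirstIndexY (σ : Fin k → S) (p : S → ℝ × ℝ) : S → ℝ × ℝ :=
  fun s => ((p s).1, firstIndex σ s)

noncomputable def canonicalConf (Sa : Set S) (σ : Fin k → S) : S → ℝ × ℝ :=
  fun s => (canonicalX Sa σ s, firstIndex σ s)

section Canonical

variable {Sa : Set S} {σ : Fin k → S}

lemma condC3_canonicalConf (hσ : Function.Surjective σ) : CondC3 Sa (canonicalConf Sa σ) := by
  refine ⟨fun s hs => if_pos hs, fun s hs => ?_⟩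
  simp only [canonicalConf, canonicalX, if_neg hs]
  have := firstIndex_le_lastIndex hσ s
  have : (firstIndex σ s : ℝ) ≤ lastIndex σ s := by exact_mod_cast this
  linarith

lemma condC1_canonicalConf (hσ : Function.Surjective σ) (hII : CondII σ)
    (hIII : CondIII Sa σ) : CondC1 σ (canonicalConf Sa σ) := by
  intro s s' hne (h : Nested σ s s')
  have hs' : s' ∉ Sa := fun hs' => h.not_existsUnique (hIII s' hs')
  by_cases hs : s ∈ Sa
  · rw [(condC3_canonicalConf hσ).1 s hs]
    exact (condC3_canonicalConf hσ).2 s' hs'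
  · obtain ⟨hfirst, hlast⟩ := h.firstIndex_lt_and_lastIndex_lt hσ hII hne
    simp only [canonicalConf, canonicalX, if_neg hs, if_neg hs']
    have : (firstIndex σ s' : ℝ) < firstIndex σ s := by exact_mod_cast hfirst
    have : (lastIndex σ s : ℝ) < lastIndex σ s' := by exact_mod_cast hlast
    linarith

lemma segment_withFirstIndexY_subset (hσ : Function.Surjective σ) {p : S → ℝ × ℝ}
    (hp : p ∈ admissibleConf Sa σ) :
    segment ℝ p (withFirstIndexY σ p) ⊆ admissibleConf Sa σ := by
  obtain ⟨-, hC1, hC2, hC3⟩ := hp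
  rintro _ ⟨α, β, hα, hβ, hαβ, rfl⟩
  have hx : ∀ s, ((α • p + β • withFirstIndexY σ p) s).1 = (p s).1 := fun s => by
    rw [smul_add_smul_apply, withFirstIndexY, ← add_mul, hαβ, one_mul]
  refine mem_admissibleConf_of_conds (fun s s' hne (h : Nested σ s s') => ?_)
    (fun s s' hne hxe (h : Precedes σ s s') => ?_) ?_
  · rw [hx, hx]
    exact hC1 s s' hne h
  · rw [hx, hx] at hxe
    exact combo_lt_combo hα hβ hαβ (hC2 s s' hne hxe h)
      (Nat.cast_lt.mpr (h.firstIndex_lt hσ))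
  · simpa only [CondC3, hx] using hC3

lemma segment_withFirstIndexY_canonicalConf_subset (hσ : Function.Surjective σ)
    (hII : CondII σ) (hIII : CondIII Sa σ) {p : S → ℝ × ℝ} (hC1 : CondC1 σ p)
    (hC3 : CondC3 Sa p) :
    segment ℝ (withFirstIndexY σ p) (canonicalConf Sa σ) ⊆ admissibleConf Sa σ := by
  rintro _ ⟨α, β, hα, hβ, hαβ, rfl⟩
  have hx : ∀ s, ((α • withFirstIndexY σ p + β • canonicalConf Sa σ) s).1 =
      α * (p s).1 + β * (canonicalConf Sa σ s).1 := fun s => rfl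
  have hy : ∀ s, ((α • withFirstIndexY σ p + β • canonicalConf Sa σ) s).2 = firstIndex σ s :=
      fun s => by
    rw [smul_add_smul_apply, withFirstIndexY, canonicalConf, ← add_mul, hαβ, one_mul]
  obtain ⟨hC3a, hC3c⟩ := condC3_canonicalConf (Sa := Sa) hσ
  refine mem_admissibleConf_of_conds (fun s s' hne (h : Nested σ s s') => ?_)
    (fun s s' hne _ (h : Precedes σ s s') => ?_) ⟨?_, ?_⟩
  · rw [hx, hx]
    exact combo_lt_combo hα hβ hαβ (hC1 s s' hne h)
      (condC1_canonicalConf hσ hII hIII s s' hne h)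
  · rw [hy, hy]
    exact_mod_cast h.firstIndex_lt hσ
  · intro s hs
    rw [hx, hC3.1 s hs, hC3a s hs]
    ring
  · intro s hs
    simpa only [hx, mul_zero, add_zero] using
      combo_lt_combo hα hβ hαβ (hC3.2 s hs) (hC3c s hs)

end Canonical

end

theorem statement1_general {S : Type*} (Sa : Set S) (k : ℕ) (σ : Fin k → S) (hσ : MemD σ)
    (hIII : CondIII Sa σ) :
    ContractibleSpace
      {p : S → ℝ × ℝ //
        p ∈ Conf S ∧ CondC1 σ p ∧ CondC2 σ p ∧ CondC3 Sa p} := by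
  obtain ⟨hsurj, -, hII⟩ := hσ
  let P := admissibleConf Sa σ
  have hcanonical : canonicalConf Sa σ ∈ P :=
    segment_withFirstIndexY_canonicalConf_subset hsurj hII hIII
      (condC1_canonicalConf hsurj hII hIII) (condC3_canonicalConf hsurj)
      (right_mem_segment _ _ _)
  let straightenY : C(P, P) :=
    ⟨fun p => ⟨withFirstIndexY σ p,
        segment_withFirstIndexY_subset hsurj p.2 (right_mem_segment _ _ _)⟩,
      (continuous_pi fun s => ((continuous_apply s).comp continuous_subtype_val).fst.prodMk
        continuous_const).subtype_mk _⟩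
  refine (contractible_iff_id_nullhomotopic P).2 ⟨⟨_, hcanonical⟩, ?_⟩
  refine .trans (g := straightenY) (.of_segment_subset fun p => ?_)
    (.of_segment_subset fun p => ?_)
  · exact segment_withFirstIndexY_subset hsurj p.2
  · exact segment_withFirstIndexY_canonicalConf_subset hsurj hII hIII p.2.2.1 p.2.2.2.2

/-- For an SC set `S = S_c ⊔ S_a`, `N ≥ 0` and `σ ∈ D(S, N)`
satisfying (III), the subspace of `Conf(S)` of configurations satisfying (C1), (C2)
and (C3) is contractible. -/
theorem statement1 {S : Type*} [Fintype S] (Sa : Set S) (N k : ℕ)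
    (hk : k = N + Fintype.card S) (σ : Fin k → S) (hσ : MemD σ)
    (hIII : CondIII Sa σ) :
    ContractibleSpace
      {p : S → ℝ × ℝ //
        p ∈ Conf S ∧ CondC1 σ p ∧ CondC2 σ p ∧ CondC3 Sa p} :=
  statement1_general Sa k σ hσ hIII
end

section
/- Let S be a finite set with m = |S|, let N ≥ 0 be an integer, and let σ ∈ D(S, N). Then the union X_σ = ⋃_{(≤₁,τ) ∈ J(σ)} FN_{(≤₁,τ)} of Fox–Neuwirth cells equals the set of all configurations p ∈ Conf(S) satisfying conditions (C1) and (C2). -/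
/-- A pruned 2-tree on `S`: a linear order `r` (as a `≤`-relation) together with a
surjection `τ : S → Fin n` which is monotone with respect to `r`. -/
def IsPruned2Tree {S : Type*} {n : ℕ} (r : S → S → Prop) (τ : S → Fin n) : Prop :=
  IsLinearOrder S r ∧ Function.Surjective τ ∧ ∀ s s', r s s' → τ s ≤ τ s'

/-- The Fox–Neuwirth cell of a 2-tree `(r, τ)`: configurations `p` such that
(i) `τ s < τ s'` implies `x_s < x_{s'}`, and (ii) `τ s = τ s'` and `s <₁ s'`
imply `x_s = x_{s'}` and `y_s < y_{s'}`. -/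
def FNcell {S : Type*} {n : ℕ} (r : S → S → Prop) (τ : S → Fin n) :
    Set (S → ℝ × ℝ) :=
  {p | Function.Injective p ∧
    (∀ s s', τ s < τ s' → (p s).1 < (p s').1) ∧
    (∀ s s', τ s = τ s' → r s s' → s ≠ s' →
      (p s).1 = (p s').1 ∧ (p s).2 < (p s').2)}

/-- `σ ∈ D(τ, N)`: the additional conditions (B) and (C) relative to the 2-tree
`(r, τ)` (conditions (I), (II) and surjectivity, i.e. `σ ∈ D(S, N)`, are imposed
separately). -/
def MemDtree {S : Type*} {n k : ℕ} (r : S → S → Prop) (τ : S → Fin n)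
    (σ : Fin k → S) : Prop :=
  (∀ s s' : S, s ≠ s' →
      (∃ i j₁ j₂ : Fin k, σ i = s ∧ σ j₁ = s' ∧ σ j₂ = s' ∧ j₁ < i ∧ i < j₂) →
      τ s < τ s') ∧
  (∀ s s' : S, τ s = τ s' → r s s' → s ≠ s' →
      ∀ i j : Fin k, σ i = s → σ j = s' → i < j)

/-!
Membership in a Fox–Neuwirth cell of a tree in `J(σ)` gives (C1) directly from (B). For (C2):
equal `x`-coordinates force equal `τ`-values, and then condition (C) together with
surjectivity of `σ` rules out `s' <₁ s`.

Conversely, a configuration `p` satisfying (C1) and (C2) lies in the cell of its own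
2-tree: `τ` is the dense rank of the `x`-coordinates and `≤₁` the lexicographic order of
the points. Condition (B) is then (C1). For (C), note that by (C1) the `σ`-preimages of two
points on a common vertical line are two separated blocks, and (C2) decides their order.
-/

section DenseRank

variable {S α : Type*} [Fintype S] [LinearOrder α]

noncomputable def denseRank (f : S → α) (s : S) : Fin (Finset.univ.image f).card :=
  ((Finset.univ.image f).orderIsoOfFin rfl).symm
    ⟨f s, Finset.mem_image_of_mem f (Finset.mem_univ s)⟩

variable {f : S → α}

theorem denseRank_lt_denseRank {s s' : S} : denseRank f s < denseRank f s' ↔ f s < f s' := by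
  simp only [denseRank, OrderIso.lt_iff_lt, Subtype.mk_lt_mk]

theorem denseRank_eq_denseRank {s s' : S} : denseRank f s = denseRank f s' ↔ f s = f s' := by
  simp only [denseRank, EmbeddingLike.apply_eq_iff_eq, Subtype.mk.injEq]

theorem denseRank_le_denseRank {s s' : S} : denseRank f s ≤ denseRank f s' ↔ f s ≤ f s' := by
  simp only [← not_lt, denseRank_lt_denseRank]

theorem denseRank_surjective : Function.Surjective (denseRank f) := by
  intro a
  set e := (Finset.univ.image f).orderIsoOfFin rfl
  obtain ⟨s, -, hs⟩ := Finset.mem_image.mp (e a).2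
  exact ⟨s, e.symm_apply_eq.mpr (Subtype.ext hs)⟩

end DenseRank

theorem isLinearOrder_preimage {S β : Type*} [LinearOrder β] {f : S → β} (hf : f.Injective) :
    IsLinearOrder S (f ⁻¹'o (· ≤ ·)) :=
  { Order.Preimage.instIsPreorder, Order.Preimage.antisymm hf, Order.Preimage.instTotal with }

section ForwardInclusion

variable {S : Type*} {n k : ℕ} {r : S → S → Prop} {τ : S → Fin n} {σ : Fin k → S}
  {p : S → ℝ × ℝ}

theorem condC1_of_mem_FNcell (hD : MemDtree r τ σ) (hp : p ∈ FNcell r τ) : CondC1 σ p :=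
  fun s s' hne hnest => hp.2.1 s s' (hD.1 s s' hne hnest)

theorem eq_of_mem_FNcell_of_fst_eq (hp : p ∈ FNcell r τ) {s s' : S}
    (hx : (p s).1 = (p s').1) : τ s = τ s' := by
  rcases lt_trichotomy (τ s) (τ s') with h | h | h
  · exact absurd (hp.2.1 s s' h) hx.not_lt
  · exact h
  · exact absurd (hp.2.1 s' s h) hx.not_gt

theorem condC2_of_mem_FNcell (hr : Std.Total r) (hσ : Function.Surjective σ)
    (hD : MemDtree r τ σ) (hp : p ∈ FNcell r τ) : CondC2 σ p := by
  intro s s' hne hx hbefore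
  have hτ := eq_of_mem_FNcell_of_fst_eq hp hx
  rcases hr.total s s' with hss' | hs's
  · exact (hp.2.2 s s' hτ hss' hne).2
  · obtain ⟨i, hi⟩ := hσ s
    obtain ⟨j, hj⟩ := hσ s'
    exact absurd (hbefore i j hi hj) (hD.2 s' s hτ.symm hs's hne.symm j i hj hi).not_gt

end ForwardInclusion

/-- Otherwise one of `s, s'` occurs between two occurrences of the other, and (C1) makes
their `x`-coordinates differ. -/
theorem CondC1.preimages_separated {S : Type*} {k : ℕ} {σ : Fin k → S} {p : S → ℝ × ℝ}
    (h : CondC1 σ p) {s s' : S} (hne : s ≠ s') (hx : (p s).1 = (p s').1) :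
    (∀ i j, σ i = s → σ j = s' → i < j) ∨ (∀ i j, σ i = s' → σ j = s → i < j) := by
  by_contra! hcon
  obtain ⟨⟨a, b, ha, hb, hba_le⟩, ⟨b', a', hb', ha', hab'_le⟩⟩ := hcon
  have hba : b < a := hba_le.lt_of_ne (by rintro rfl; exact hne (ha.symm.trans hb))
  have hab' : a' < b' := hab'_le.lt_of_ne (by rintro rfl; exact hne (ha'.symm.trans hb'))
  rcases lt_or_ge b a' with hba' | hab_le
  · exact (h s s' hne ⟨a', b, b', ha', hb, hb', hba', hab'⟩).ne hx
  · have hab : a' < b := hab_le.lt_of_ne (by rintro rfl; exact hne (ha'.symm.trans hb))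
    exact (h s' s hne.symm ⟨b, a', a, hb, ha', ha, hab, hba⟩).ne hx.symm

section CanonicalTree

variable {S : Type*} {k : ℕ} {σ : Fin k → S} {p : S → ℝ × ℝ}

def lexLE (p : S → ℝ × ℝ) : S → S → Prop := (toLex ∘ p) ⁻¹'o (· ≤ ·)

theorem snd_lt_of_lexLE (hp : p.Injective) {s s' : S} (hne : s ≠ s') (hr : lexLE p s s')
    (hx : (p s).1 = (p s').1) : (p s).2 < (p s').2 := by
  have hy := ((Prod.Lex.toLex_le_toLex.mp hr).resolve_left hx.not_lt).2
  exact hy.lt_of_ne fun hy => hne (hp (Prod.ext hx hy))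

variable [Fintype S]

theorem isPruned2Tree_lexLE_denseRank (hp : p.Injective) :
    IsPruned2Tree (lexLE p) (denseRank fun s => (p s).1) :=
  ⟨isLinearOrder_preimage (toLex.injective.comp hp), denseRank_surjective,
    fun _ _ hr => denseRank_le_denseRank.mpr (Prod.Lex.monotone_fst _ _ hr)⟩

theorem mem_FNcell_lexLE_denseRank (hp : p.Injective) :
    p ∈ FNcell (lexLE p) (denseRank fun s => (p s).1) :=
  ⟨hp, fun _ _ => denseRank_lt_denseRank.mp, fun _ _ hτ hr hne =>
    have hx := denseRank_eq_denseRank.mp hτ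
    ⟨hx, snd_lt_of_lexLE hp hne hr hx⟩⟩

theorem memDtree_lexLE_denseRank (hp : p.Injective) (h₁ : CondC1 σ p) (h₂ : CondC2 σ p) :
    MemDtree (lexLE p) (denseRank fun s => (p s).1) σ := by
  refine ⟨fun s s' hne hnest => denseRank_lt_denseRank.mpr (h₁ s s' hne hnest), ?_⟩
  intro s s' hτ hr hne
  have hx := denseRank_eq_denseRank.mp hτ
  have hy := snd_lt_of_lexLE hp hne hr hx
  exact (h₁.preimages_separated hne hx).resolve_right
    fun hafter => (h₂ s' s hne.symm hx.symm hafter).not_gt hy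

end CanonicalTree

theorem statement2_general {S : Type*} [Fintype S] (k : ℕ)
    (σ : Fin k → S) (hσ : MemD σ) :
    {p : S → ℝ × ℝ | ∃ (n : ℕ) (r : S → S → Prop) (τ : S → Fin n),
        IsPruned2Tree r τ ∧ MemDtree r τ σ ∧ p ∈ FNcell r τ}
      = {p : S → ℝ × ℝ | p ∈ Conf S ∧ CondC1 σ p ∧ CondC2 σ p} := by
  ext p
  constructor
  · rintro ⟨n, r, τ, htree, hD, hp⟩
    exact ⟨hp.1, condC1_of_mem_FNcell hD hp,
      condC2_of_mem_FNcell htree.1.toTotal hσ.1 hD hp⟩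
  · rintro ⟨hp, h₁, h₂⟩
    exact ⟨_, lexLE p, _, isPruned2Tree_lexLE_denseRank hp,
      memDtree_lexLE_denseRank hp h₁ h₂, mem_FNcell_lexLE_denseRank hp⟩

/-- The union `X_σ` of the Fox–Neuwirth cells over all pruned 2-trees
`(r, τ)` on `S` with `σ ∈ D(τ, N)` equals the set of configurations satisfying (C1)
and (C2). -/
theorem statement2 {S : Type*} [Fintype S] (N k : ℕ)
    (hk : k = N + Fintype.card S) (σ : Fin k → S) (hσ : MemD σ) :
    {p : S → ℝ × ℝ | ∃ (n : ℕ) (r : S → S → Prop) (τ : S → Fin n),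
        IsPruned2Tree r τ ∧ MemDtree r τ σ ∧ p ∈ FNcell r τ}
      = {p : S → ℝ × ℝ | p ∈ Conf S ∧ CondC1 σ p ∧ CondC2 σ p} :=
  statement2_general k σ hσ
end

section
/- Let S = S_c ⊔ S_a be an SC set with m = |S|, let N ≥ 0 be an integer, and let σ ∈ D(S, N) additionally satisfy condition (III). Then the union X_σ = ⋃_{(≤₁,τ) ∈ J(σ)} FN_{(≤₁,τ)} of SC Fox–Neuwirth cells, where J(σ) is the set of pruned SC 2-trees (≤₁,τ) on S with σ ∈ D(τ, N), equals the set of all configurations p ∈ Conf(S) satisfying conditions (C1), (C2) and (C3). -/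
/-- A pruned SC 2-tree on the SC set `S = S_c ⊔ S_a` (with `Sa ⊆ S`): a linear order
`r` and a map `τ : S → Fin (n+1)` monotone with respect to `r`, with `τ⁻¹(0) = S_a`
and `{1, …, n} ⊆ τ(S)`. -/
def IsPrunedSC2Tree {S : Type*} (Sa : Set S) {n : ℕ} (r : S → S → Prop)
    (τ : S → Fin (n + 1)) : Prop :=
  IsLinearOrder S r ∧ (∀ s s', r s s' → τ s ≤ τ s') ∧
  (∀ s, τ s = 0 ↔ s ∈ Sa) ∧
  (∀ j : Fin (n + 1), j ≠ 0 → ∃ s, τ s = j)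

/-- The Fox–Neuwirth cell of an SC 2-tree `(r, τ)`: configurations `p` with
(o) `x_s = 0` for `s ∈ S_a`, `x_s > 0` for `s ∈ S_c`; (i) `τ s < τ s'` implies
`x_s < x_{s'}`; (ii) `τ s = τ s'` and `s <₁ s'` imply `x_s = x_{s'}` and
`y_s < y_{s'}`. -/
def FNcellSC {S : Type*} (Sa : Set S) {n : ℕ} (r : S → S → Prop)
    (τ : S → Fin (n + 1)) : Set (S → ℝ × ℝ) :=
  {p | Function.Injective p ∧
    (∀ s ∈ Sa, (p s).1 = 0) ∧ (∀ s ∉ Sa, 0 < (p s).1) ∧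
    (∀ s s', τ s < τ s' → (p s).1 < (p s').1) ∧
    (∀ s s', τ s = τ s' → r s s' → s ≠ s' →
      (p s).1 = (p s').1 ∧ (p s).2 < (p s').2)}

/-- `σ ∈ D(τ, N)` for an SC 2-tree `(r, τ)`: the additional conditions (B) and (C)
(conditions (I), (II), (III) and surjectivity are imposed separately). -/
def MemDtreeSC {S : Type*} {n k : ℕ} (r : S → S → Prop) (τ : S → Fin (n + 1))
    (σ : Fin k → S) : Prop :=
  (∀ s s' : S, s ≠ s' →
      (∃ i j₁ j₂ : Fin k, σ i = s ∧ σ j₁ = s' ∧ σ j₂ = s' ∧ j₁ < i ∧ i < j₂) →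
      τ s < τ s') ∧
  (∀ s s' : S, τ s = τ s' → r s s' → s ≠ s' →
      ∀ i j : Fin k, σ i = s → σ j = s' → i < j)

/-!
A cell `FN_{(≤₁,τ)}` with `σ ∈ D(τ, N)` satisfies (C1)–(C3) almost by definition; the one
point is (C2): two points on a common vertical line lie on one level of `τ`, where (C) and the
surjectivity of `σ` force `≤₁` to agree with the order of the fibres of `σ`.

Conversely, a configuration satisfying (C1)–(C3) lies in the cell of the tree whose `τ` ranks
the distinct `x`-coordinates (the vertical axis `x = 0` getting rank `0`) and whose `≤₁` is the
lexicographic order of the points. Condition (C) for this tree comes from (C2), because (C1)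
forbids the fibres of two points on a common vertical line to interleave.
-/

open Finset in
theorem exists_rank_fin {S α : Type*} [Fintype S] [LinearOrder α] (f : S → α) (a : α)
    (ha : ∀ s, a ≤ f s) :
    ∃ (n : ℕ) (τ : S → Fin (n + 1)), (∀ s s', τ s < τ s' ↔ f s < f s') ∧
      (∀ s, τ s = 0 ↔ f s = a) ∧ ∀ j : Fin (n + 1), j ≠ 0 → ∃ s, τ s = j := by
  classical
  set W := insert a (univ.image f)
  have hfW : ∀ s, f s ∈ W := fun s => mem_insert_of_mem (mem_image_of_mem f (mem_univ s))
  have haW : a ∈ W := mem_insert_self _ _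
  have ha_le : ∀ w ∈ W, a ≤ w := by
    simp only [W, mem_insert, mem_image, mem_univ, true_and]
    rintro w (rfl | ⟨s, rfl⟩)
    exacts [le_rfl, ha s]
  obtain ⟨n, hn⟩ : ∃ n, #W = n + 1 := Nat.exists_eq_add_one.2 (card_pos.2 ⟨a, haW⟩)
  set e := W.orderIsoOfFin hn
  have he_a : e.symm ⟨a, haW⟩ = 0 :=
    le_antisymm (e.symm_apply_le.2 (ha_le _ (e 0).2)) (Fin.zero_le _)
  refine ⟨n, fun s => e.symm ⟨f s, hfW s⟩, fun s s' => by simp, fun s => ?_, fun j hj => ?_⟩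
  · rw [← he_a, e.symm.injective.eq_iff, Subtype.mk.injEq]
  · have hj_mem := (e j).2
    simp only [W, mem_insert, mem_image, mem_univ, true_and] at hj_mem
    rcases hj_mem with hj_a | ⟨s, hs⟩
    · exact absurd (by rw [← he_a, ← (Subtype.ext hj_a : e j = ⟨a, haW⟩), e.symm_apply_apply]) hj
    · exact ⟨s, by rw [← e.symm_apply_apply j, ← (Subtype.ext hs : (⟨f s, hfW s⟩ : W) = e j)]⟩

section Configurations

variable {S : Type*} {k : ℕ} {σ : Fin k → S} {p : S → ℝ × ℝ}

theorem CondC1.lt_of_lt_of_fst_eq (h : CondC1 σ p) {s s' : S} (hne : s ≠ s')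
    (hx : (p s).1 = (p s').1) {i j i' j' : Fin k} (hi : σ i = s) (hj : σ j = s')
    (hi' : σ i' = s) (hj' : σ j' = s') (hij : i < j) : i' < j' := by
  by_contra! hle
  have hj'i' : j' < i' := hle.lt_of_ne fun h => hne (by rw [← hi', ← h, hj'])
  rcases lt_or_gt_of_ne (show j ≠ i' from fun h => hne (by rw [← hi', ← h, hj])) with hji' | hi'j
  · exact (h s' s hne.symm ⟨j, i, i', hj, hi, hi', hij, hji'⟩).ne' hx
  · exact (h s s' hne ⟨i', j', j, hi', hj', hj, hj'i', hi'j⟩).ne hx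

theorem eq_of_eq_of_forall_lt_imp_lt {α β : Type*} [LinearOrder α] [LinearOrder β]
    {f : S → α} {g : S → β} (h : ∀ s s', g s < g s' → f s < f s') {s s' : S}
    (hf : f s = f s') : g s = g s' :=
  le_antisymm (not_lt.1 fun hlt => (h s' s hlt).ne' hf) (not_lt.1 fun hlt => (h s s' hlt).ne hf)

theorem condC_of_mem_FNcellSC {Sa : Set S} {n : ℕ} {r : S → S → Prop} {τ : S → Fin (n + 1)}
    (hσ : Function.Surjective σ) (hr : ∀ s s', r s s' ∨ r s' s) (hD : MemDtreeSC r τ σ)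
    (hp : p ∈ FNcellSC Sa r τ) :
    p ∈ Conf S ∧ CondC1 σ p ∧ CondC2 σ p ∧ CondC3 Sa p := by
  obtain ⟨hinj, hSa, hSc, hlt, hsame⟩ := hp
  refine ⟨hinj, fun s s' hne hint => hlt s s' (hD.1 s s' hne hint),
    fun s s' hne hx hbefore => ?_, hSa, hSc⟩
  have hτ := eq_of_eq_of_forall_lt_imp_lt hlt hx
  refine (hr s s').elim (fun h => (hsame s s' hτ h hne).2) fun h => ?_
  obtain ⟨i, hi⟩ := hσ s
  obtain ⟨j, hj⟩ := hσ s'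
  exact absurd (hbefore i j hi hj) (hD.2 s' s hτ.symm h hne.symm j i hj hi).asymm

theorem exists_mem_FNcellSC_of_condC [Fintype S] {Sa : Set S} (hp : p ∈ Conf S)
    (h1 : CondC1 σ p) (h2 : CondC2 σ p) (h3 : CondC3 Sa p) :
    ∃ (n : ℕ) (r : S → S → Prop) (τ : S → Fin (n + 1)),
      IsPrunedSC2Tree Sa r τ ∧ MemDtreeSC r τ σ ∧ p ∈ FNcellSC Sa r τ := by
  have hx_nonneg : ∀ s, 0 ≤ (p s).1 := fun s => by
    by_cases hs : s ∈ Sa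
    exacts [(h3.1 s hs).ge, (h3.2 s hs).le]
  obtain ⟨n, τ, hτlt, hτ0, hτsurj⟩ := exists_rank_fin (fun s => (p s).1) 0 hx_nonneg
  have hτeq : ∀ s s', τ s = τ s' ↔ (p s).1 = (p s').1 := fun s s' => by
    simp only [le_antisymm_iff, ← not_lt, hτlt]
  let r : S → S → Prop := Function.onFun (· ≤ ·) (toLex ∘ p)
  have hr_snd : ∀ s s', r s s' → (p s).1 = (p s').1 → (p s).2 ≤ (p s').2 := fun s s' h hx =>
    ((Prod.Lex.toLex_le_toLex.1 h).resolve_left hx.not_lt).2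
  refine ⟨n, r, τ, ⟨(toLex.injective.comp hp).isLinearOrder_onFun _, ?_, ?_, hτsurj⟩,
    ⟨fun s s' hne hint => (hτlt s s').2 (h1 s s' hne hint), ?_⟩,
    hp, h3.1, h3.2, fun s s' h => (hτlt s s').1 h, ?_⟩
  · intro s s' h
    rcases Prod.Lex.toLex_le_toLex.1 h with hx | ⟨hx, -⟩
    exacts [((hτlt s s').2 hx).le, ((hτeq s s').2 hx).le]
  · intro s
    rw [hτ0]
    exact ⟨fun hx => by_contra fun hs => (h3.2 s hs).ne' hx, h3.1 s⟩
  · intro s s' hτ h hne i j hi hj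
    have hx := (hτeq s s').1 hτ
    by_contra! hle
    have hji : j < i := hle.lt_of_ne fun h => hne (by rw [← hi, ← h, hj])
    exact (h2 s' s hne.symm hx.symm fun j' i' hj' hi' =>
      h1.lt_of_lt_of_fst_eq hne.symm hx.symm hj hi hj' hi' hji).not_ge (hr_snd s s' h hx)
  · intro s s' hτ h hne
    have hx := (hτeq s s').1 hτ
    exact ⟨hx, (hr_snd s s' h hx).lt_of_ne fun hy => hne (hp (Prod.ext hx hy))⟩

end Configurations

theorem statement3_general {S : Type*} [Fintype S] (Sa : Set S) (k : ℕ)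
    (σ : Fin k → S) (hσ : MemD σ) :
    {p : S → ℝ × ℝ | ∃ (n : ℕ) (r : S → S → Prop) (τ : S → Fin (n + 1)),
        IsPrunedSC2Tree Sa r τ ∧ MemDtreeSC r τ σ ∧ p ∈ FNcellSC Sa r τ}
      = {p : S → ℝ × ℝ |
          p ∈ Conf S ∧ CondC1 σ p ∧ CondC2 σ p ∧ CondC3 Sa p} := by
  ext p
  constructor
  · rintro ⟨n, r, τ, htree, hD, hp⟩
    exact condC_of_mem_FNcellSC hσ.1 htree.1.total hD hp
  · rintro ⟨hp, h1, h2, h3⟩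
    exact exists_mem_FNcellSC_of_condC hp h1 h2 h3

/-- For an SC set `S = S_c ⊔ S_a` and `σ ∈ D(S, N)` satisfying (III),
the union `X_σ` of the SC Fox–Neuwirth cells over all pruned SC 2-trees `(r, τ)` on
`S` with `σ ∈ D(τ, N)` equals the set of configurations satisfying (C1), (C2), (C3). -/
theorem statement3 {S : Type*} [Fintype S] (Sa : Set S) (N k : ℕ)
    (hk : k = N + Fintype.card S) (σ : Fin k → S) (hσ : MemD σ)
    (hIII : CondIII Sa σ) :
    {p : S → ℝ × ℝ | ∃ (n : ℕ) (r : S → S → Prop) (τ : S → Fin (n + 1)),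
        IsPrunedSC2Tree Sa r τ ∧ MemDtreeSC r τ σ ∧ p ∈ FNcellSC Sa r τ}
      = {p : S → ℝ × ℝ |
          p ∈ Conf S ∧ CondC1 σ p ∧ CondC2 σ p ∧ CondC3 Sa p} :=
  statement3_general Sa k σ hσ
end

section
/- Let (≤₁, τ : S → Fin n) be a pruned 2-tree on a finite set S with m = |S|. Then the Fox–Neuwirth cell FN_{(≤₁,τ)} is homeomorphic to ℝ^{m+n}. -/
/-!
The cell is parametrised by the common abscissa `x_t` of each column `t : Fin n` together with
the ordinates `y_s`; the defining conditions say exactly that these `n + |S|` reals satisfy a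
finite family of strict inequalities `z i < z j`. The solution set of such a family is an open
convex cone, nonempty as soon as the family is acyclic; applying `arctan` in every coordinate
maps it onto its intersection with the box `(-π/2, π/2)^(n+|S|)`, which is bounded, and a bounded open convex set in a
finite-dimensional space is homeomorphic to the whole space (Minkowski gauge rescaling).
-/

open Set Real Bornology

theorem Convex.nonempty_homeomorph_of_isOpen_of_isBounded {E : Type*} [NormedAddCommGroup E]
    [NormedSpace ℝ E] {s : Set E} (hc : Convex ℝ s) (ho : IsOpen s) (hb : IsBounded s)
    (hne : s.Nonempty) : Nonempty (s ≃ₜ E) := by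
  obtain ⟨e, he, -, -⟩ :=
    exists_homeomorph_image_interior_closure_frontier_eq_unitBall hc (by rwa [ho.interior_eq]) hb
  rw [ho.interior_eq] at he
  exact ⟨(e.image s).trans ((Homeomorph.setCongr he).trans Homeomorph.unitBall.symm)⟩

section OrderCone

variable {ι : Type*} (R : ι → ι → Prop)

def orderCone : Set (ι → ℝ) := {x | ∀ i j, R i j → x i < x j}

theorem isOpen_orderCone [Finite ι] : IsOpen (orderCone R) := by
  simp only [orderCone, ofPred_forall]
  exact isOpen_iInter_of_finite fun i => isOpen_iInter_of_finite fun j =>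
    isOpen_iInter_of_finite fun _ => isOpen_lt (continuous_apply i) (continuous_apply j)

theorem convex_orderCone : Convex ℝ (orderCone R) := by
  intro x hx y hy a b ha hb hab i j hij
  simp only [Pi.add_apply, Pi.smul_apply, smul_eq_mul]
  rcases ha.eq_or_lt with rfl | ha
  · obtain rfl : b = 1 := by simpa using hab
    simpa using hy i j hij
  · exact add_lt_add_of_lt_of_le (mul_lt_mul_of_pos_left (hx i j hij) ha)
      (mul_le_mul_of_nonneg_left (hy i j hij).le hb)

theorem orderCone_nonempty [Fintype ι] [IsStrictOrder ι R] : (orderCone R).Nonempty := by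
  classical
  refine ⟨fun i => ((Finset.univ.filter (R · i)).card : ℝ), fun i j hij => ?_⟩
  refine Nat.cast_lt.2 (Finset.card_lt_card ⟨fun k hk => ?_, fun hsub => ?_⟩)
  · simp only [Finset.mem_filter, Finset.mem_univ, true_and] at hk ⊢
    exact _root_.trans hk hij
  · exact irrefl i (by simpa using hsub (by simpa using hij))

noncomputable def orderCone.arctanHomeomorph :
    orderCone R ≃ₜ ↥(orderCone R ∩ univ.pi fun _ => Ioo (-(π / 2)) (π / 2)) where
  toFun x := ⟨arctan ∘ x, fun i j h => arctan_strictMono (x.2 i j h),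
    fun _ _ => arctan_mem_Ioo _⟩
  invFun y := ⟨tan ∘ y, fun i j h =>
    strictMonoOn_tan (y.2.2 i (mem_univ i)) (y.2.2 j (mem_univ j)) (y.2.1 i j h)⟩
  left_inv _ := Subtype.ext (funext fun _ => tan_arctan _)
  right_inv y := Subtype.ext (funext fun i => arctan_tan (y.2.2 i (mem_univ i)).1
    (y.2.2 i (mem_univ i)).2)
  continuous_toFun := (continuous_pi fun i =>
    continuous_arctan.comp ((continuous_apply i).comp continuous_subtype_val)).subtype_mk _
  continuous_invFun := (continuous_pi fun i =>
    continuousOn_tan_Ioo.comp_continuous ((continuous_apply i).comp continuous_subtype_val)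
      fun y => y.2.2 i (mem_univ i)).subtype_mk _

theorem orderCone.nonempty_homeomorph [Fintype ι] [IsStrictOrder ι R] :
    Nonempty (orderCone R ≃ₜ (ι → ℝ)) := by
  set e := orderCone.arctanHomeomorph R
  set s := orderCone R ∩ univ.pi fun _ => Ioo (-(π / 2)) (π / 2)
  have hconv : Convex ℝ s := (convex_orderCone R).inter (convex_pi fun _ _ => convex_Ioo _ _)
  have hopen : IsOpen s :=
    (isOpen_orderCone R).inter (isOpen_set_pi finite_univ fun _ _ => isOpen_Ioo)
  have hbdd : IsBounded s :=
    (IsBounded.pi fun _ => Metric.isBounded_Ioo _ _).subset inter_subset_right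
  obtain ⟨x, hx⟩ := orderCone_nonempty R
  obtain ⟨f⟩ := hconv.nonempty_homeomorph_of_isOpen_of_isBounded hopen hbdd ⟨_, (e ⟨x, hx⟩).2⟩
  exact ⟨e.trans f⟩

end OrderCone

section FNcell

variable {S : Type*} {n : ℕ} {r : S → S → Prop} {τ : S → Fin n}

variable (r τ) in
def fiberLT (a b : S) : Prop := τ a = τ b ∧ r a b ∧ a ≠ b

variable (r τ) in
abbrev cellRel : Fin n ⊕ S → Fin n ⊕ S → Prop := Sum.LiftRel (· < ·) (fiberLT r τ)

instance fiberLT.isStrictOrder [IsPartialOrder S r] : IsStrictOrder S (fiberLT r τ) where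
  irrefl _ h := h.2.2 rfl
  trans _ _ _ hab hbc := ⟨hab.1.trans hbc.1, _root_.trans hab.2.1 hbc.2.1,
    fun hac => hab.2.2 (antisymm hab.2.1 (hac ▸ hbc.2.1))⟩

theorem fst_eq_of_mem_FNcell [Std.Total r] {p : S → ℝ × ℝ} (hp : p ∈ FNcell r τ) {a b : S}
    (hab : τ a = τ b) : (p a).1 = (p b).1 := by
  rcases eq_or_ne a b with rfl | hne
  · rfl
  rcases total_of r a b with h | h
  · exact (hp.2.2 a b hab h hne).1
  · exact (hp.2.2 b a hab.symm h hne.symm).1.symm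

theorem mem_orderCone_of_mem_FNcell {p : S → ℝ × ℝ} (hp : p ∈ FNcell r τ) {sec : Fin n → S}
    (hsec : ∀ t, τ (sec t) = t) :
    Sum.elim (fun t => (p (sec t)).1) (fun a => (p a).2) ∈ orderCone (cellRel r τ) := by
  rintro _ _ (⟨h⟩ | ⟨⟨h₁, h₂, h₃⟩⟩)
  · exact hp.2.1 _ _ (by rwa [hsec, hsec])
  · exact (hp.2.2 _ _ h₁ h₂ h₃).2

theorem mem_FNcell_of_mem_orderCone [Std.Total r] {x : Fin n ⊕ S → ℝ}
    (hx : x ∈ orderCone (cellRel r τ)) :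
    (fun a => (x (.inl (τ a)), x (.inr a))) ∈ FNcell r τ := by
  have hcol : StrictMono fun t => x (.inl t) := fun _ _ h => hx _ _ (.inl h)
  have hrow : ∀ a b, fiberLT r τ a b → x (.inr a) < x (.inr b) :=
    fun _ _ h => hx _ _ (.inr h)
  refine ⟨fun a b hab => ?_, fun a b h => hcol h,
    fun a b h₁ h₂ h₃ => ⟨congrArg (fun t => x (.inl t)) h₁, hrow a b ⟨h₁, h₂, h₃⟩⟩⟩
  obtain ⟨hx₁, hy⟩ := Prod.mk.inj hab
  have hτ : τ a = τ b := hcol.injective hx₁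
  by_contra hne
  rcases total_of r a b with h | h
  · exact (hrow a b ⟨hτ, h, hne⟩).ne hy
  · exact (hrow b a ⟨hτ.symm, h, Ne.symm hne⟩).ne' hy

noncomputable def FNcell.homeomorphOrderCone [Std.Total r] (hτ : Function.Surjective τ) :
    FNcell r τ ≃ₜ orderCone (cellRel r τ) where
  toFun p := ⟨_, mem_orderCone_of_mem_FNcell p.2 (Function.surjInv_eq hτ)⟩
  invFun x := ⟨_, mem_FNcell_of_mem_orderCone x.2⟩
  left_inv p := Subtype.ext (funext fun a =>
    Prod.ext (fst_eq_of_mem_FNcell p.2 (Function.surjInv_eq hτ (τ a))) rfl)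
  right_inv x := Subtype.ext (funext (Sum.forall.2
    ⟨fun t => by simp [Function.surjInv_eq hτ t], fun a => rfl⟩))
  continuous_toFun := by
    refine (continuous_pi ?_).subtype_mk _
    rintro (t | a)
    exacts [((continuous_apply _).comp continuous_subtype_val).fst,
      ((continuous_apply a).comp continuous_subtype_val).snd]
  continuous_invFun := (continuous_pi fun _ =>
    ((continuous_apply _).comp continuous_subtype_val).prodMk
      ((continuous_apply _).comp continuous_subtype_val)).subtype_mk _

end FNcell

/-- The Fox–Neuwirth cell of a pruned 2-tree `(r, τ : S → Fin n)` on
a finite set `S` with `m = |S|` is homeomorphic to `ℝ^{m+n}`. -/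
theorem statement4 {S : Type*} [Fintype S] {n : ℕ}
    (r : S → S → Prop) (τ : S → Fin n) (h : IsPruned2Tree r τ) :
    Nonempty (↥(FNcell r τ) ≃ₜ (Fin (Fintype.card S + n) → ℝ)) := by
  obtain ⟨_, hτ, -⟩ := h
  have : IsStrictOrder (Fin n ⊕ S) (cellRel r τ) := {}
  obtain ⟨e⟩ := orderCone.nonempty_homeomorph (cellRel r τ)
  have hcard : Fintype.card (Fin n ⊕ S) = Fintype.card (Fin (Fintype.card S + n)) := by
    simp [add_comm]
  exact ⟨(FNcell.homeomorphOrderCone hτ).trans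
    (e.trans (Homeomorph.piCongrLeft (Y := fun _ => ℝ) (Fintype.equivOfCardEq hcard)))⟩
end

section
/- Let S = S_c ⊔ S_a be an SC set with m = |S| and let (≤₁, τ : S → Fin (n+1)) be a pruned SC 2-tree on S. Then the SC Fox–Neuwirth cell FN_{(≤₁,τ)} is homeomorphic to ℝ^{m+n} (that is, its dimension is |S| + |T| − 1 where T = Fin(n+1)). -/
/-! The points of level `j` of a configuration in the cell share an abscissa `X j`, and `X` is a
strictly increasing sequence on `Fin (n + 1)` with `X 0 = 0`, hence the sequence of partial sums
of `n` arbitrary positive increments `exp uᵢ`. The ordinates are independent of the abscissae and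
only have to increase along `≤₁` on each level; a strictly increasing real function on a finite
chain is likewise determined by its first value and the logarithms of its increments. So the cell
is homeomorphic to `ℝⁿ × ℝ^S`. -/

open Real

theorem Fin.continuous_partialSum {M : Type*} [AddMonoid M] [TopologicalSpace M]
    [ContinuousAdd M] {k : ℕ} (j : Fin (k + 1)) :
    Continuous fun u : Fin k → M => Fin.partialSum u j := by
  induction j using Fin.induction with
  | zero => simpa using continuous_const
  | succ i ih =>
    simp only [Fin.partialSum_succ]
    exact ih.add (continuous_apply i)

theorem Fin.sub_pos_of_strictMono {k : ℕ} {X : Fin (k + 1) → ℝ} (hX : StrictMono X) (i : Fin k) :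
    0 < X i.succ - X i.castSucc :=
  sub_pos.2 (Fin.strictMono_iff_lt_succ.1 hX i)

noncomputable def expPartialSumHomeomorph (k : ℕ) :
    (Fin k → ℝ) ≃ₜ {X : Fin (k + 1) → ℝ // X 0 = 0 ∧ StrictMono X} where
  toFun u := ⟨Fin.partialSum (exp ∘ u), Fin.partialSum_zero _,
    Fin.strictMono_iff_lt_succ.2 fun i => by simp [Fin.partialSum_succ, exp_pos]⟩
  invFun X i := log (X.1 i.succ - X.1 i.castSucc)
  left_inv u := funext fun i => by simp [Fin.partialSum_succ]
  right_inv := by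
    rintro ⟨X, hX0, hX⟩
    ext1
    have hpos := Fin.sub_pos_of_strictMono hX
    simpa [Function.comp_def, exp_log (hpos _), hX0, neg_add_eq_sub] using
      Fin.partialSum_left_neg X
  continuous_toFun :=
    (continuous_pi fun j => (Fin.continuous_partialSum j).comp (by fun_prop)).subtype_mk _
  continuous_invFun := continuous_pi fun i =>
    (((continuous_apply i.succ).comp continuous_subtype_val).sub
      ((continuous_apply i.castSucc).comp continuous_subtype_val)).log fun X =>
        (Fin.sub_pos_of_strictMono X.2.2 i).ne'

noncomputable def strictMonoHomeomorphHeadProd (k : ℕ) :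
    {f : Fin (k + 1) → ℝ // StrictMono f} ≃ₜ
      ℝ × {X : Fin (k + 1) → ℝ // X 0 = 0 ∧ StrictMono X} where
  toFun f := (f.1 0, ⟨fun j => f.1 j - f.1 0, sub_self _, fun _ _ h => sub_lt_sub_right (f.2 h) _⟩)
  invFun aX := ⟨fun j => aX.1 + aX.2.1 j, fun _ _ h => (add_lt_add_iff_left _).2 (aX.2.2.2 h)⟩
  left_inv f := Subtype.ext (funext fun j => add_sub_cancel _ _)
  right_inv := by
    rintro ⟨a, X, hX0, hX⟩
    ext1
    · simp [hX0]
    · ext1; funext j; simp [hX0]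
  continuous_toFun := by
    have hf : Continuous fun f : {f : Fin (k + 1) → ℝ // StrictMono f} => f.1 :=
      continuous_subtype_val
    refine ((continuous_apply 0).comp hf).prodMk ((continuous_pi fun j => ?_).subtype_mk _)
    exact ((continuous_apply j).comp hf).sub ((continuous_apply 0).comp hf)
  continuous_invFun := by
    refine Continuous.subtype_mk (continuous_pi fun j => continuous_fst.add ?_) _
    exact (continuous_apply j).comp (continuous_subtype_val.comp continuous_snd)

theorem nonempty_strictMono_homeomorph (α : Type*) [Finite α] [LinearOrder α] :
    Nonempty ({f : α → ℝ // StrictMono f} ≃ₜ (α → ℝ)) := by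
  have := Fintype.ofFinite α
  cases hk : Fintype.card α with
  | zero =>
    have := Fintype.card_eq_zero_iff.1 hk
    exact ⟨{ toFun := Subtype.val
             invFun := fun f => ⟨f, fun a => isEmptyElim a⟩
             continuous_invFun := continuous_id.subtype_mk _ }⟩
  | succ k =>
    let e := Fintype.orderIsoFinOfCardEq α hk
    let E : (Fin (k + 1) → ℝ) ≃ₜ (α → ℝ) :=
      Homeomorph.piCongrLeft (Y := fun _ => ℝ) e.toEquiv
    have hE (f : α → ℝ) : StrictMono f ↔ StrictMono (E.symm f) :=
      ⟨fun hf => hf.comp e.strictMono, fun hf => by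
        simpa [E, Function.comp_def] using hf.comp e.symm.strictMono⟩
    exact ⟨(E.symm.subtype hE).trans <| (strictMonoHomeomorphHeadProd k).trans <|
      ((Homeomorph.refl ℝ).prodCongr (expPartialSumHomeomorph k).symm).trans <|
      (Fin.consEquivL ℝ fun _ => ℝ).toHomeomorph.trans E⟩

theorem nonempty_strictMonoOn_fibers_homeomorph {S β : Type*} [Finite S] [LinearOrder S]
    (τ : S → β) : Nonempty ({y : S → ℝ // ∀ b, StrictMonoOn y (τ ⁻¹' {b})} ≃ₜ (S → ℝ)) := by
  let restrict : (S → ℝ) ≃ₜ ∀ b, (τ ⁻¹' {b} → ℝ) :=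
    { toFun y b t := y t
      invFun w s := w (τ s) ⟨s, rfl⟩
      left_inv _ := rfl
      right_inv w := by ext b ⟨t, rfl⟩; rfl
      continuous_toFun := continuous_pi fun b => continuous_pi fun t => continuous_apply _
      continuous_invFun := continuous_pi fun s => (continuous_apply _).comp (continuous_apply _) }
  let distrib : {w : ∀ b, τ ⁻¹' {b} → ℝ // ∀ b, StrictMono (w b)} ≃ₜ
      ∀ b, {f : τ ⁻¹' {b} → ℝ // StrictMono f} :=
    { Equiv.subtypePiEquivPi with
      continuous_toFun := continuous_pi fun b =>
        ((continuous_apply b).comp continuous_subtype_val).subtype_mk _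
      continuous_invFun := (continuous_pi fun b =>
        continuous_subtype_val.comp (continuous_apply b)).subtype_mk _ }
  have hrestrict (y : S → ℝ) :
      (∀ b, StrictMonoOn y (τ ⁻¹' {b})) ↔ ∀ b, StrictMono (restrict y b) :=
    forall_congr' fun b => Set.strictMonoOn_iff_strictMono
  exact ⟨(restrict.subtype hrestrict).trans <| distrib.trans <|
    (Homeomorph.piCongrRight fun b => (nonempty_strictMono_homeomorph _).some).trans
      restrict.symm⟩

section FoxNeuwirthCell

variable {S : Type*} {n : ℕ} {Sa : Set S} {τ : S → Fin (n + 1)} {p : S → ℝ × ℝ}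

open Classical in
/-- The abscissa shared by the points of level `j`. The junk value `0` is the right one on
level `0`, the only level that may be empty. -/
noncomputable def levelAbscissa (τ : S → Fin (n + 1)) (p : S → ℝ × ℝ) (j : Fin (n + 1)) : ℝ :=
  if h : ∃ s, τ s = j then (p h.choose).1 else 0

theorem continuous_levelAbscissa (j : Fin (n + 1)) :
    Continuous fun p : S → ℝ × ℝ => levelAbscissa τ p j := by
  unfold levelAbscissa
  split_ifs
  · exact continuous_fst.comp (continuous_apply _)
  · exact continuous_const

theorem levelAbscissa_of_strictMono {X : Fin (n + 1) → ℝ} (hX0 : X 0 = 0) {y : S → ℝ}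
    (hsur : ∀ j : Fin (n + 1), j ≠ 0 → ∃ s, τ s = j) :
    levelAbscissa τ (fun s => (X (τ s), y s)) = X := by
  funext j
  rw [levelAbscissa]
  split_ifs with h
  · exact congrArg X h.choose_spec
  · rw [not_imp_comm.1 (hsur j) h, hX0]

variable [LinearOrder S]

theorem fst_eq_of_mem_FNcellSC (hp : p ∈ FNcellSC Sa (· ≤ ·) τ) {s s' : S} (h : τ s = τ s') :
    (p s).1 = (p s').1 := by
  rcases lt_trichotomy s s' with hlt | rfl | hlt
  · exact (hp.2.2.2.2 s s' h hlt.le hlt.ne).1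
  · rfl
  · exact (hp.2.2.2.2 s' s h.symm hlt.le hlt.ne).1.symm

theorem strictMonoOn_snd_of_mem_FNcellSC (hp : p ∈ FNcellSC Sa (· ≤ ·) τ) (j : Fin (n + 1)) :
    StrictMonoOn (fun s => (p s).2) (τ ⁻¹' {j}) := fun s hs s' hs' hlt =>
  (hp.2.2.2.2 s s' (hs.trans hs'.symm) hlt.le hlt.ne).2

theorem levelAbscissa_apply (hp : p ∈ FNcellSC Sa (· ≤ ·) τ) (s : S) :
    levelAbscissa τ p (τ s) = (p s).1 := by
  have hs : ∃ s', τ s' = τ s := ⟨s, rfl⟩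
  rw [levelAbscissa, dif_pos hs]
  exact fst_eq_of_mem_FNcellSC hp hs.choose_spec

theorem levelAbscissa_zero (hp : p ∈ FNcellSC Sa (· ≤ ·) τ) (h0 : ∀ s, τ s = 0 ↔ s ∈ Sa) :
    levelAbscissa τ p 0 = 0 := by
  rw [levelAbscissa]
  split_ifs with h
  · exact hp.2.1 _ ((h0 _).1 h.choose_spec)
  · rfl

theorem strictMono_levelAbscissa (hp : p ∈ FNcellSC Sa (· ≤ ·) τ)
    (h0 : ∀ s, τ s = 0 ↔ s ∈ Sa) (hsur : ∀ j : Fin (n + 1), j ≠ 0 → ∃ s, τ s = j) :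
    StrictMono (levelAbscissa τ p) := by
  intro j j' hjj'
  obtain ⟨s', rfl⟩ := hsur j' (ne_bot_of_gt hjj')
  rw [levelAbscissa_apply hp]
  rcases eq_or_ne j 0 with rfl | hj
  · rw [levelAbscissa_zero hp h0]
    exact hp.2.2.1 s' fun hs' => hjj'.ne' ((h0 s').2 hs')
  · obtain ⟨s, rfl⟩ := hsur j hj
    rw [levelAbscissa_apply hp]
    exact hp.2.2.2.1 s s' hjj'

theorem mem_FNcellSC_of_strictMono {X : Fin (n + 1) → ℝ} (hX0 : X 0 = 0) (hX : StrictMono X)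
    {y : S → ℝ} (hy : ∀ j, StrictMonoOn y (τ ⁻¹' {j})) (h0 : ∀ s, τ s = 0 ↔ s ∈ Sa) :
    (fun s => (X (τ s), y s)) ∈ FNcellSC Sa (· ≤ ·) τ := by
  refine ⟨fun s s' hss' => ?_, fun s hs => ?_, fun s hs => ?_, fun s s' h => hX h,
    fun s s' h hle hne => ⟨congrArg X h, hy (τ s') h rfl (lt_of_le_of_ne hle hne)⟩⟩
  · obtain ⟨hx, hy'⟩ := Prod.ext_iff.1 hss'
    have hτ := hX.injective hx
    exact (hy (τ s')).injOn hτ rfl hy'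
  · show X (τ s) = 0
    rw [(h0 s).2 hs, hX0]
  · rw [← hX0]
    exact hX (pos_of_ne_zero fun h => hs ((h0 s).1 h))

noncomputable def FNcellSC.homeomorphProd (h0 : ∀ s, τ s = 0 ↔ s ∈ Sa)
    (hsur : ∀ j : Fin (n + 1), j ≠ 0 → ∃ s, τ s = j) :
    FNcellSC Sa (· ≤ ·) τ ≃ₜ {X : Fin (n + 1) → ℝ // X 0 = 0 ∧ StrictMono X} ×
      {y : S → ℝ // ∀ j, StrictMonoOn y (τ ⁻¹' {j})} where
  toFun p := (⟨levelAbscissa τ p, levelAbscissa_zero p.2 h0, strictMono_levelAbscissa p.2 h0 hsur⟩,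
    ⟨fun s => (p.1 s).2, strictMonoOn_snd_of_mem_FNcellSC p.2⟩)
  invFun Xy := ⟨fun s => (Xy.1.1 (τ s), Xy.2.1 s),
    mem_FNcellSC_of_strictMono Xy.1.2.1 Xy.1.2.2 Xy.2.2 h0⟩
  left_inv p := Subtype.ext <| funext fun s => Prod.ext (levelAbscissa_apply p.2 s) rfl
  right_inv Xy := Prod.ext (Subtype.ext (levelAbscissa_of_strictMono Xy.1.2.1 hsur)) rfl
  continuous_toFun := by
    refine Continuous.prodMk ?_ ?_
    · exact (continuous_pi fun j =>
        (continuous_levelAbscissa j).comp continuous_subtype_val).subtype_mk _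
    · exact (continuous_pi fun s =>
        continuous_snd.comp ((continuous_apply s).comp continuous_subtype_val)).subtype_mk _
  continuous_invFun := by
    refine Continuous.subtype_mk (continuous_pi fun s => Continuous.prodMk ?_ ?_) _
    · exact (continuous_apply _).comp (continuous_subtype_val.comp continuous_fst)
    · exact (continuous_apply _).comp (continuous_subtype_val.comp continuous_snd)

end FoxNeuwirthCell

noncomputable abbrev IsLinearOrder.toLinearOrder {α : Type*} (r : α → α → Prop)
    [IsLinearOrder α r] : LinearOrder α where
  le := r
  le_refl := refl_of r
  le_trans _ _ _ := _root_.trans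
  le_antisymm _ _ := antisymm
  le_total := total_of r
  toDecidableLE := Classical.decRel r

/-- The Fox–Neuwirth cell of a pruned SC 2-tree
`(r, τ : S → Fin (n+1))` on an SC set `S` with `m = |S|` is homeomorphic to
`ℝ^{m+n}` (its dimension is `|S| + |T| − 1`). -/
theorem statement5 {S : Type*} [Fintype S] (Sa : Set S) {n : ℕ}
    (r : S → S → Prop) (τ : S → Fin (n + 1)) (h : IsPrunedSC2Tree Sa r τ) :
    Nonempty (↥(FNcellSC Sa r τ) ≃ₜ (Fin (Fintype.card S + n) → ℝ)) := by
  obtain ⟨hr, -, h0, hsur⟩ := h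
  let _ := @IsLinearOrder.toLinearOrder S r hr
  obtain ⟨ordinates⟩ := nonempty_strictMonoOn_fibers_homeomorph τ
  let relabel : (S → ℝ) ≃ₜ (Fin (Fintype.card S) → ℝ) :=
    Homeomorph.piCongrLeft (Y := fun _ => ℝ) (Fintype.equivFin S)
  exact ⟨(FNcellSC.homeomorphProd h0 hsur).trans <|
    ((expPartialSumHomeomorph n).symm.prodCongr (ordinates.trans relabel)).trans <|
    (Homeomorph.prodComm _ _).trans (Fin.appendHomeomorph _ _)⟩
end

section
/- Let S = S_c ⊔ S_a be an SC set with m = |S|, N ≥ 0, and let (≤₁, τ) be a pruned SC 2-tree on S with σ ∈ D(τ, N), where σ ∈ D(S, N) also satisfies condition (III). Define Φ_σ(τ) ⊆ Conf(S) as the union of the SC Fox–Neuwirth cells FN_{(≤₂,τ̃)} over all pruned SC 2-trees (≤₂, τ̃) on S with σ ∈ D(τ̃, N) that admit a morphism from (≤₁, τ) inducing the identity on S. Then Φ_σ(τ) is contractible. -/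
/-- A morphism of pruned SC 2-trees on `S` from `(r, τ)` to `(r', τ')` inducing the
identity on `S`: a monotone map `P : Fin (n+1) → Fin (n'+1)` with `P 0 = 0` and
`τ' = P ∘ τ` such that `τ s = τ s'` and `s <₁ s'` imply `s <₂ s'`. -/
def SCTreeMorphism {S : Type*} {n n' : ℕ} (r : S → S → Prop) (τ : S → Fin (n + 1))
    (r' : S → S → Prop) (τ' : S → Fin (n' + 1)) : Prop :=
  ∃ P : Fin (n + 1) → Fin (n' + 1), Monotone P ∧ P 0 = 0 ∧
    (∀ s, τ' s = P (τ s)) ∧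
    ∀ s s' : S, τ s = τ s' → r s s' → s ≠ s' → r' s s'

/-- The SC version of `Φ_σ(τ)`. -/
def PhiSC {S : Type*} (Sa : Set S) {n k : ℕ} (r : S → S → Prop)
    (τ : S → Fin (n + 1)) (σ : Fin k → S) : Set (S → ℝ × ℝ) :=
  {p | ∃ (n' : ℕ) (r' : S → S → Prop) (τ' : S → Fin (n' + 1)),
      IsPrunedSC2Tree Sa r' τ' ∧ MemDtreeSC r' τ' σ ∧ SCTreeMorphism r τ r' τ' ∧
      p ∈ FNcellSC Sa r' τ'}

/-- For an SC set `S = S_c ⊔ S_a`, `σ ∈ D(S, N)` satisfying (III),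
and a pruned SC 2-tree `(r, τ)` with `σ ∈ D(τ, N)`, the space `Φ_σ(τ)` is
contractible. -/
theorem statement8 {S : Type*} [Fintype S] (Sa : Set S) (N k : ℕ)
    (hk : k = N + Fintype.card S) {n : ℕ} (r : S → S → Prop)
    (τ : S → Fin (n + 1)) (htree : IsPrunedSC2Tree Sa r τ)
    (σ : Fin k → S) (hσ : MemD σ) (hIII : CondIII Sa σ)
    (hτσ : MemDtreeSC r τ σ) :
    ContractibleSpace ↥(PhiSC Sa r τ σ) := by
  classical
  obtain ⟨hlin, hmono, h0, hsurj⟩ := htree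
  have htot : ∀ s s', r s s' ∨ r s' s := fun s s' => hlin.total s s'
  have htrans : ∀ {a b c}, r a b → r b c → r a c := fun h1 h2 => hlin.trans _ _ _ h1 h2
  have hanti : ∀ {a b}, r a b → r b a → a = b := fun h1 h2 => hlin.antisymm _ _ h1 h2
  -- the base point
  set yrank : S → ℝ := fun s => ((Finset.univ.filter (fun t => r t s ∧ t ≠ s)).card : ℝ)
    with hyrank
  have hylt : ∀ s s', r s s' → s ≠ s' → yrank s < yrank s' := by
    intro s s' hr hne
    have hsub : (Finset.univ.filter (fun t => r t s ∧ t ≠ s)) ⊂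
        (Finset.univ.filter (fun t => r t s' ∧ t ≠ s')) := by
      constructor
      · intro t ht
        simp only [Finset.mem_filter, Finset.mem_univ, true_and] at ht ⊢
        refine ⟨htrans ht.1 hr, fun h => ?_⟩
        subst h
        exact hne (hanti hr ht.1)
      · intro hcon
        have hs : s ∈ (Finset.univ.filter (fun t => r t s' ∧ t ≠ s')) := by
          simp [hr, hne]
        have := hcon hs
        simp at this
    have hc := Finset.card_lt_card hsub
    simp only [hyrank]
    exact_mod_cast hc
  set p₀ : S → ℝ × ℝ := fun s => (((τ s : ℕ) : ℝ), yrank s) with hp₀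
  have hp₀cell : p₀ ∈ FNcellSC Sa r τ := by
    refine ⟨?_, ?_, ?_, ?_, ?_⟩
    · intro s s' h
      by_contra hne
      have hx : ((τ s : ℕ) : ℝ) = ((τ s' : ℕ) : ℝ) := congrArg Prod.fst h
      have hy : yrank s = yrank s' := congrArg Prod.snd h
      rcases htot s s' with hr | hr
      · exact absurd hy (ne_of_lt (hylt s s' hr hne))
      · exact absurd hy.symm (ne_of_lt (hylt s' s hr (Ne.symm hne)))
    · intro s hs
      have : τ s = 0 := (h0 s).2 hs
      simp [hp₀, this]
    · intro s hs
      have : τ s ≠ 0 := fun h => hs ((h0 s).1 h)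
      have h2 : 0 < (τ s : ℕ) := Nat.pos_of_ne_zero (fun h => this (Fin.ext h))
      simp only [hp₀]
      exact_mod_cast h2
    · intro s s' h
      simp only [hp₀]
      exact_mod_cast (Fin.lt_iff_val_lt_val.1 h)
    · intro s s' heq hr hne
      exact ⟨by simp [hp₀, heq], hylt s s' hr hne⟩
  have hp₀mem : p₀ ∈ PhiSC Sa r τ σ :=
    ⟨n, r, τ, ⟨hlin, hmono, h0, hsurj⟩, hτσ,
      ⟨id, monotone_id, rfl, fun s => rfl, fun s s' _ h _ => h⟩, hp₀cell⟩
  have hstar : StarConvex ℝ p₀ (PhiSC Sa r τ σ) := by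
    intro q hq a b ha hb hab
    rcases eq_or_lt_of_le hb with hb0 | hb0
    · have : a • p₀ + b • q = p₀ := by
        funext s; simp [← hb0, show a = 1 by linarith]
      rw [this]; exact hp₀mem
    rcases eq_or_lt_of_le ha with ha0 | ha0
    · have : a • p₀ + b • q = q := by
        funext s; simp [← ha0, show b = 1 by linarith]
      rw [this]; exact hq
    -- main case : 0 < a, 0 < b
    obtain ⟨n', r', τ', htree', hτσ', ⟨P, hPmono, hP0, hPτ, hord⟩,
      qinj, qx0, qxpos, qxlt, qeq⟩ := hq
    obtain ⟨hlin', -, -, -⟩ := htree'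
    have htot' : ∀ s s', r' s s' ∨ r' s' s := fun s s' => hlin'.total s s'
    have hqle : ∀ s s', τ s ≤ τ s' → (q s).1 ≤ (q s').1 := by
      intro s s' h
      have h' : τ' s ≤ τ' s' := by rw [hPτ, hPτ]; exact hPmono h
      rcases lt_or_eq_of_le h' with h' | h'
      · exact (qxlt s s' h').le
      · by_cases hne : s = s'
        · subst hne; exact le_refl _
        · rcases htot' s s' with hr | hr
          · exact (qeq s s' h' hr hne).1.le
          · exact (qeq s' s h'.symm hr (Ne.symm hne)).1.ge
    have hz : ∀ s : S, (a • p₀ + b • q) s =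
        (a * ((τ s : ℕ) : ℝ) + b * (q s).1, a * yrank s + b * (q s).2) := by
      intro s
      simp [hp₀, Prod.ext_iff, Prod.fst_add, Prod.snd_add, smul_eq_mul]
    have hqy : ∀ s s', τ s = τ s' → r s s' → s ≠ s' →
        (q s).1 = (q s').1 ∧ (q s).2 < (q s').2 := by
      intro s s' heq hr hne
      have h' : τ' s = τ' s' := by rw [hPτ, hPτ, heq]
      exact qeq s s' h' (hord s s' heq hr hne) hne
    refine ⟨n, r, τ, ⟨hlin, hmono, h0, hsurj⟩, hτσ,
      ⟨id, monotone_id, rfl, fun s => rfl, fun s s' _ h _ => h⟩,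
      ?_, ?_, ?_, ?_, ?_⟩
    · -- injectivity
      intro s s' h
      by_contra hne
      rw [hz, hz] at h
      simp only [Prod.mk.injEq] at h
      obtain ⟨hx, hy⟩ := h
      rcases lt_trichotomy (τ s) (τ s') with hτlt | hτeq | hτlt
      · have h1 : ((τ s : ℕ) : ℝ) < ((τ s' : ℕ) : ℝ) := by
          exact_mod_cast (Fin.lt_iff_val_lt_val.1 hτlt)
        have := add_lt_add_of_lt_of_le (mul_lt_mul_of_pos_left h1 ha0)
          (mul_le_mul_of_nonneg_left (hqle s s' hτlt.le) hb)
        linarith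
      · rcases htot s s' with hr | hr
        · have h1 := hylt s s' hr hne
          have h2 := (hqy s s' hτeq hr hne).2
          nlinarith
        · have h1 := hylt s' s hr (Ne.symm hne)
          have h2 := (hqy s' s hτeq.symm hr (Ne.symm hne)).2
          nlinarith
      · have h1 : ((τ s' : ℕ) : ℝ) < ((τ s : ℕ) : ℝ) := by
          exact_mod_cast (Fin.lt_iff_val_lt_val.1 hτlt)
        have := add_lt_add_of_lt_of_le (mul_lt_mul_of_pos_left h1 ha0)
          (mul_le_mul_of_nonneg_left (hqle s' s hτlt.le) hb)
        linarith
    · intro s hs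
      rw [hz]
      have h1 : τ s = 0 := (h0 s).2 hs
      have h2 : (q s).1 = 0 := qx0 s hs
      simp [h1, h2]
    · intro s hs
      rw [hz]
      have h1 : τ s ≠ 0 := fun h => hs ((h0 s).1 h)
      have h1' : (0:ℝ) < ((τ s : ℕ) : ℝ) := by
        exact_mod_cast Nat.pos_of_ne_zero (fun h => h1 (Fin.ext h))
      exact add_pos (mul_pos ha0 h1') (mul_pos hb0 (qxpos s hs))
    · intro s s' h
      rw [hz, hz]
      have h1 : ((τ s : ℕ) : ℝ) < ((τ s' : ℕ) : ℝ) := by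
        exact_mod_cast (Fin.lt_iff_val_lt_val.1 h)
      exact add_lt_add_of_lt_of_le (mul_lt_mul_of_pos_left h1 ha0)
        (mul_le_mul_of_nonneg_left (hqle s s' h.le) hb)
    · intro s s' heq hr hne
      rw [hz, hz]
      obtain ⟨hqx, hqy2⟩ := hqy s s' heq hr hne
      constructor
      · simp [heq, hqx]
      · have h1 := hylt s s' hr hne
        exact add_lt_add_of_le_of_lt (mul_le_mul_of_nonneg_left h1.le ha)
          (mul_lt_mul_of_pos_left hqy2 hb0)
  exact hstar.contractibleSpace ⟨p₀, hp₀mem⟩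
end

section
/- Let S be a finite set with m = |S|, N ≥ 0, and let (≤₁, τ) be a pruned 2-tree on S with σ ∈ D(τ, N); identify S with {1, …, m} via the order ≤₁, and let Φ_σ(τ) ⊆ Conf(S) be the union of the Fox–Neuwirth cells FN_{(≤₂,τ̃)} over all pruned 2-trees (≤₂, τ̃) on S with σ ∈ D(τ̃, N) that admit a morphism from (≤₁, τ) inducing the identity on S. For 0 ≤ k ≤ m let F_k = {p ∈ Φ_σ(τ) : y_i = i for all i ≤ k}. Then for every 0 ≤ k ≤ m − 1, F_{k+1} is a deformation retract of F_k; consequently F_m is a deformation retract of Φ_σ(τ) = F_0. -/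
/-- A morphism of pruned 2-trees on `S` from `(r, τ)` to `(r', τ')` inducing the
identity on `S`: a monotone map `P : Fin n → Fin n'` with `τ' = P ∘ τ` such that
`τ s = τ s'` and `s <₁ s'` imply `s <₂ s'`. -/
def TreeMorphism {S : Type*} {n n' : ℕ} (r : S → S → Prop) (τ : S → Fin n)
    (r' : S → S → Prop) (τ' : S → Fin n') : Prop :=
  ∃ P : Fin n → Fin n', Monotone P ∧ (∀ s, τ' s = P (τ s)) ∧
    ∀ s s' : S, τ s = τ s' → r s s' → s ≠ s' → r' s s'

/-- The space `Φ_σ(τ)`: the union of the Fox–Neuwirth cells `FN_{(r', τ')}` over all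
pruned 2-trees `(r', τ')` on `S` with `σ ∈ D(τ', N)` admitting a morphism from
`(r, τ)` inducing the identity on `S`. -/
def Phi {S : Type*} {n k : ℕ} (r : S → S → Prop) (τ : S → Fin n)
    (σ : Fin k → S) : Set (S → ℝ × ℝ) :=
  {p | ∃ (n' : ℕ) (r' : S → S → Prop) (τ' : S → Fin n'),
      IsPruned2Tree r' τ' ∧ MemDtree r' τ' σ ∧ TreeMorphism r τ r' τ' ∧
      p ∈ FNcell r' τ'}

/-- `A` is a deformation retract of `X`: there is a continuous
`H : X × [0,1] → X` with `H(x,0) = x`, `H(x,1) ∈ A`, and `H(a,t) = a` for `a ∈ A`. -/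
def IsDefRetract {E : Type*} [TopologicalSpace E] (A X : Set E) : Prop :=
  A ⊆ X ∧
  ∃ H : C(↥X × unitInterval, ↥X),
    (∀ x : ↥X, H (x, 0) = x) ∧
    (∀ x : ↥X, (H (x, 1) : E) ∈ A) ∧
    (∀ (x : ↥X) (t : unitInterval), (x : E) ∈ A → H (x, t) = x)

/-!
Membership in `Φ_σ(τ)` can be read off the coordinates of a configuration alone
(`mem_Phi_iff`): the target 2-tree is recovered by ranking the distinct x-coordinates and
ordering each column by height. In this description every condition except injectivity is a
weak or strict linear inequality, and injectivity survives convex combinations because two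
configurations of `Φ_σ(τ)` stack the points of a common column in the same order (otherwise
`σ⁻¹(s)` would precede `σ⁻¹(s')` and vice versa). Hence `Φ_σ(τ)`, and with it every `F_k`,
is convex.

`F_{k+1}` is the slice of `F_k` on which the linear function `y_{k+1}` equals `k + 1`, and
`F_k` contains configurations on both sides of this level. Sliding every point of `F_k` along
a segment towards one of them retracts `F_k` continuously onto `F_{k+1}`, and the
straight-line homotopy to this retraction stays in the convex set `F_k`.
-/

open Function

section Retraction

variable {E : Type*} [TopologicalSpace E]

def RetractsOnto (X A : Set E) : Prop :=
  ∃ r : E → E, Continuous r ∧ Set.MapsTo r X A ∧ ∀ a ∈ A, r a = a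

theorem RetractsOnto.refl (X : Set E) : RetractsOnto X X :=
  ⟨id, continuous_id, Set.mapsTo_id X, fun _ _ => rfl⟩

theorem RetractsOnto.trans {X B A : Set E} (hXB : RetractsOnto X B) (hBA : RetractsOnto B A)
    (hAB : A ⊆ B) : RetractsOnto X A := by
  obtain ⟨r, hr, hrX, hrB⟩ := hXB
  obtain ⟨r', hr', hr'B, hr'A⟩ := hBA
  refine ⟨r' ∘ r, hr'.comp hr, hr'B.comp hrX, fun a ha => ?_⟩
  rw [comp_apply, hrB a (hAB ha), hr'A a ha]

variable [AddCommGroup E] [Module ℝ E] [IsTopologicalAddGroup E] [ContinuousSMul ℝ E]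

theorem Convex.isDefRetract_of_retractsOnto {X A : Set E} (hX : Convex ℝ X) (hAX : A ⊆ X)
    (h : RetractsOnto X A) : IsDefRetract A X := by
  obtain ⟨r, hr, hrX, hrA⟩ := h
  refine ⟨hAX, ⟨fun z => ⟨AffineMap.lineMap (z.1 : E) (r z.1) (z.2 : ℝ),
    hX.lineMap_mem z.1.2 (hAX (hrX z.1.2)) z.2.2⟩, ?_⟩, fun x => ?_, fun x => ?_, fun x t hx => ?_⟩
  · fun_prop
  · exact Subtype.ext (AffineMap.lineMap_apply_zero _ _)
  · simpa using hrX x.2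
  · exact Subtype.ext (by simp [hrA x hx])

/-- Sliding each point towards `b` just far enough to reach the half-space `c ≤ φ`. -/
theorem Convex.exists_retraction_max {X : Set E} (hX : Convex ℝ X) (φ : E →L[ℝ] ℝ) {c : ℝ}
    {b : E} (hb : b ∈ X) (hcb : c < φ b) :
    ∃ r : E → E, Continuous r ∧ Set.MapsTo r X X ∧
      ∀ p, φ (r p) = max (φ p) c ∧ (c ≤ φ p → r p = p) := by
  set t : E → ℝ := fun p => max (c - φ p) 0 / (max (c - φ p) 0 + (φ b - c))
  have hden : ∀ p, 0 < max (c - φ p) 0 + (φ b - c) := fun p => by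
    have := le_max_right (c - φ p) 0; linarith
  have ht : ∀ p, t p ∈ Set.Icc (0 : ℝ) 1 := fun p =>
    ⟨div_nonneg (le_max_right _ _) (hden p).le, (div_le_one (hden p)).2 (by linarith)⟩
  refine ⟨fun p => AffineMap.lineMap p b (t p), ?_, fun p hp => hX.lineMap_mem hp hb (ht p),
    fun p => ?_⟩
  · have ht_cont : Continuous t :=
      Continuous.div (by fun_prop) (by fun_prop) fun p => (hden p).ne'
    fun_prop
  rcases le_total c (φ p) with h | h
  · have ht0 : t p = 0 := by simp [t, h]
    simp [ht0, h]
  · have ht1 : t p = (c - φ p) / (φ b - φ p) := by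
      simp only [t, max_eq_left (sub_nonneg.2 h)]; ring_nf
    refine ⟨?_, fun h' => ?_⟩
    · change φ (AffineMap.lineMap p b (t p)) = max (φ p) c
      rw [max_eq_right h, AffineMap.lineMap_apply_module, map_add, map_smul, map_smul,
        smul_eq_mul, smul_eq_mul, ht1]
      have hne : φ b - φ p ≠ 0 := (sub_pos.2 (h.trans_lt hcb)).ne'
      field_simp
      ring
    · simp [le_antisymm h h', t]

theorem Convex.retractsOnto_inter_level {X : Set E} (hX : Convex ℝ X) (φ : E →L[ℝ] ℝ) {c : ℝ}
    {a b : E} (ha : a ∈ X) (hca : φ a < c) (hb : b ∈ X) (hcb : c < φ b) :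
    RetractsOnto X (X ∩ {p | φ p = c}) := by
  obtain ⟨r₁, hr₁, hr₁X, hr₁φ⟩ := hX.exists_retraction_max (-φ) ha (neg_lt_neg hca)
  obtain ⟨r₂, hr₂, hr₂X, hr₂φ⟩ := hX.exists_retraction_max φ hb hcb
  have hmin : ∀ p, φ (r₁ p) = min (φ p) c := fun p => by
    have := (hr₁φ p).1
    rwa [neg_apply, neg_apply, max_neg_neg, neg_inj] at this
  refine ⟨r₂ ∘ r₁, hr₂.comp hr₁, fun p hp => ⟨hr₂X (hr₁X hp), ?_⟩, fun p ⟨_, hp⟩ => ?_⟩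
  · simp [(hr₂φ _).1, hmin]
  · have hp : φ p = c := hp
    have h₁ : r₁ p = p := (hr₁φ p).2 (by simp [hp])
    simp [h₁, (hr₂φ p).2 hp.ge]

end Retraction

section Rank

variable {S α : Type*} [Fintype S] [LinearOrder α] {x : S → α} {s s' : S}

def rank (x : S → α) (s : S) : Fin (Finset.univ.image x).card :=
  ((Finset.univ.image x).orderIsoOfFin rfl).symm
    ⟨x s, Finset.mem_image_of_mem x (Finset.mem_univ s)⟩

theorem rank_le_rank_iff : rank x s ≤ rank x s' ↔ x s ≤ x s' := by
  simp [rank]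

theorem rank_lt_rank_iff : rank x s < rank x s' ↔ x s < x s' := by
  simp [rank]

theorem rank_eq_rank_iff : rank x s = rank x s' ↔ x s = x s' := by
  simp only [le_antisymm_iff, rank_le_rank_iff]

theorem rank_surjective : Surjective (rank x) := by
  intro c
  obtain ⟨s, -, hs⟩ := Finset.mem_image.1 ((Finset.univ.image x).orderIsoOfFin rfl c).2
  refine ⟨s, ?_⟩
  conv_rhs => rw [← ((Finset.univ.image x).orderIsoOfFin rfl).symm_apply_apply c]
  exact congrArg _ (Subtype.ext hs)

end Rank

section CanonicalTree

variable {S : Type*} {w : S → ℝ × ℝ} {s s' : S}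

def lexRel (w : S → ℝ × ℝ) (s s' : S) : Prop := toLex (w s) ≤ toLex (w s')

theorem isLinearOrder_lexRel (hw : Injective w) : IsLinearOrder S (lexRel w) where
  refl _ := le_rfl
  trans _ _ _ := le_trans
  antisymm _ _ h h' := hw (toLex.injective (le_antisymm h h'))
  total s s' := le_total (toLex (w s)) (toLex (w s'))

theorem lexRel_iff_of_fst_eq (h : (w s).1 = (w s').1) : lexRel w s s' ↔ (w s).2 ≤ (w s').2 := by
  simp [lexRel, Prod.Lex.toLex_le_toLex, h]

theorem snd_lt_of_lexRel (hw : Injective w) (h : (w s).1 = (w s').1) (hr : lexRel w s s')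
    (hne : s ≠ s') : (w s).2 < (w s').2 :=
  ((lexRel_iff_of_fst_eq h).1 hr).lt_of_ne fun h' => hne (hw (Prod.ext h h'))

variable [Fintype S]

theorem isPruned2Tree_lexRel (hw : Injective w) :
    IsPruned2Tree (lexRel w) (rank fun s => (w s).1) := by
  refine ⟨isLinearOrder_lexRel hw, rank_surjective, fun s s' h => rank_le_rank_iff.2 ?_⟩
  rcases Prod.Lex.toLex_le_toLex.1 h with h | ⟨h, -⟩
  exacts [h.le, h.le]

theorem mem_FNcell_lexRel (hw : Injective w) :
    w ∈ FNcell (lexRel w) (rank fun s => (w s).1) := by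
  refine ⟨hw, fun s s' h => (rank_lt_rank_iff (x := fun s => (w s).1)).1 h,
    fun s s' h hr hne => ?_⟩
  have hx : (w s).1 = (w s').1 := (rank_eq_rank_iff (x := fun s => (w s).1)).1 h
  exact ⟨hx, snd_lt_of_lexRel hw hx hr hne⟩

end CanonicalTree

section FNcell

variable {S : Type*} {n : ℕ} {r : S → S → Prop} {τ : S → Fin n} {p : S → ℝ × ℝ} {s s' : S}

theorem fst_eq_of_mem_FNcell_s9 (htot : Std.Total r) (hp : p ∈ FNcell r τ) (h : τ s = τ s') :
    (p s).1 = (p s').1 := by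
  obtain rfl | hne := eq_or_ne s s'
  · rfl
  rcases htot.total s s' with hr | hr
  exacts [(hp.2.2 s s' h hr hne).1, ((hp.2.2 s' s h.symm hr hne.symm).1).symm]

theorem eq_of_fst_eq_of_mem_FNcell (hp : p ∈ FNcell r τ) (h : (p s).1 = (p s').1) :
    τ s = τ s' := by
  rcases lt_trichotomy (τ s) (τ s') with hlt | heq | hlt
  exacts [absurd h (hp.2.1 _ _ hlt).ne, heq, absurd h (hp.2.1 _ _ hlt).ne']

theorem mem_Phi_of_mem_FNcell {k : ℕ} {σ : Fin k → S} (htree : IsPruned2Tree r τ)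
    (hσ : MemDtree r τ σ) (hp : p ∈ FNcell r τ) : p ∈ Phi r τ σ :=
  ⟨n, r, τ, htree, hσ, ⟨id, monotone_id, fun _ => rfl, fun _ _ _ h _ => h⟩, hp⟩

end FNcell

structure PhiCriterion {S : Type*} {n k : ℕ} (r : S → S → Prop) (τ : S → Fin n)
    (σ : Fin k → S) (p : S → ℝ × ℝ) : Prop where
  injective : Injective p
  condC1 : CondC1 σ p
  precedes_of_snd_lt : ∀ s s', (p s).1 = (p s').1 → (p s).2 < (p s').2 →
    ∀ i j, σ i = s → σ j = s' → i < j
  fst_le_of_le : ∀ s s', τ s ≤ τ s' → (p s).1 ≤ (p s').1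
  snd_lt_of_rel : ∀ s s', τ s = τ s' → r s s' → s ≠ s' → (p s).2 < (p s').2

section Criterion

variable {S : Type*} {n k : ℕ} {r : S → S → Prop} {τ : S → Fin n} {σ : Fin k → S}
  {p q : S → ℝ × ℝ} {s s' : S}

theorem PhiCriterion.of_mem_Phi (hp : p ∈ Phi r τ σ) : PhiCriterion r τ σ p := by
  obtain ⟨n', r', τ', ⟨hlin, -, -⟩, ⟨hB, hC⟩, ⟨P, hP, hPτ, hr⟩, hcell⟩ := hp
  have hcol : ∀ s s', τ s = τ s' → τ' s = τ' s' := fun s s' h => by rw [hPτ, hPτ, h]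
  refine ⟨hcell.1, fun s s' hne hint => hcell.2.1 _ _ (hB s s' hne hint),
    fun s s' hx hy => ?_, fun s s' h => ?_,
    fun s s' h hrs hne => (hcell.2.2 s s' (hcol s s' h) (hr s s' h hrs hne) hne).2⟩
  · have hτ' := eq_of_fst_eq_of_mem_FNcell hcell hx
    have hne : s ≠ s' := by rintro rfl; exact hy.false
    rcases hlin.total s s' with hrs | hrs
    · exact hC s s' hτ' hrs hne
    · exact absurd (hcell.2.2 s' s hτ'.symm hrs hne.symm).2 hy.not_gt
  · have h' : τ' s ≤ τ' s' := by rw [hPτ, hPτ]; exact hP h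
    rcases h'.lt_or_eq with hlt | heq
    exacts [(hcell.2.1 _ _ hlt).le, (fst_eq_of_mem_FNcell_s9 hlin.toTotal hcell heq).le]

theorem PhiCriterion.mem_Phi [Fintype S] (hτ : Surjective τ) (hp : PhiCriterion r τ σ p) :
    p ∈ Phi r τ σ := by
  have hx : ∀ s s', τ s = τ s' → (p s).1 = (p s').1 := fun s s' h =>
    (hp.fst_le_of_le s s' h.le).antisymm (hp.fst_le_of_le s' s h.ge)
  refine ⟨_, lexRel p, rank fun s => (p s).1, isPruned2Tree_lexRel hp.injective,
    ⟨fun s s' hne hint => rank_lt_rank_iff.2 (hp.condC1 s s' hne hint),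
      fun s s' h hrs hne => ?_⟩,
    ⟨fun c => rank (fun s => (p s).1) (surjInv hτ c), fun c c' h => ?_, fun s => ?_,
      fun s s' h hrs hne => ?_⟩, mem_FNcell_lexRel hp.injective⟩
  · have hx' := rank_eq_rank_iff.1 h
    exact hp.precedes_of_snd_lt s s' hx' (snd_lt_of_lexRel hp.injective hx' hrs hne)
  · refine rank_le_rank_iff.2 (hp.fst_le_of_le _ _ ?_)
    rwa [surjInv_eq hτ, surjInv_eq hτ]
  · exact rank_eq_rank_iff.2 (hx _ _ (surjInv_eq hτ _).symm)
  · exact (lexRel_iff_of_fst_eq (hx s s' h)).2 (hp.snd_lt_of_rel s s' h hrs hne).le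

theorem mem_Phi_iff [Fintype S] (hτ : Surjective τ) : p ∈ Phi r τ σ ↔ PhiCriterion r τ σ p :=
  ⟨PhiCriterion.of_mem_Phi, PhiCriterion.mem_Phi hτ⟩

end Criterion

section Convexity

variable {S : Type*} {n k : ℕ} {r : S → S → Prop} {τ : S → Fin n} {σ : Fin k → S}
  {p q : S → ℝ × ℝ} {s s' : S}

theorem eq_and_eq_of_mul_add_mul_eq {a b x x' y y' : ℝ} (ha : 0 < a) (hb : 0 < b)
    (hx : x ≤ x') (hy : y ≤ y') (h : a * x + b * y = a * x' + b * y') : x = x' ∧ y = y' := by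
  constructor <;> nlinarith [mul_le_mul_of_nonneg_left hx ha.le, mul_le_mul_of_nonneg_left hy hb.le]

theorem PhiCriterion.snd_lt_of_snd_lt (hσ : Surjective σ) (hp : PhiCriterion r τ σ p)
    (hq : PhiCriterion r τ σ q) (hpx : (p s).1 = (p s').1) (hqx : (q s).1 = (q s').1)
    (hpy : (p s).2 < (p s').2) : (q s).2 < (q s').2 := by
  have hne : s ≠ s' := by rintro rfl; exact hpy.false
  have hqy : (q s).2 ≠ (q s').2 := fun h => hne (hq.injective (Prod.ext hqx h))
  refine hqy.lt_or_gt.resolve_right fun hqy' => ?_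
  obtain ⟨i, rfl⟩ := hσ s
  obtain ⟨j, rfl⟩ := hσ s'
  exact (hp.precedes_of_snd_lt _ _ hpx hpy i j rfl rfl).asymm
    (hq.precedes_of_snd_lt _ _ hqx.symm hqy' j i rfl rfl)

theorem PhiCriterion.smul_add_smul (hσ : Surjective σ) (hp : PhiCriterion r τ σ p)
    (hq : PhiCriterion r τ σ q) {a b : ℝ} (ha : 0 < a) (hb : 0 < b) :
    PhiCriterion r τ σ (a • p + b • q) := by
  set w := a • p + b • q
  have hw : ∀ s, w s = (a * (p s).1 + b * (q s).1, a * (p s).2 + b * (q s).2) := fun _ => rfl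
  have hlt : ∀ {x x' y y' : ℝ}, x < x' → y < y' → a * x + b * y < a * x' + b * y' :=
    fun hx hy => by gcongr
  have hle : ∀ {x x' y y' : ℝ}, x ≤ x' → y ≤ y' → a * x + b * y ≤ a * x' + b * y' :=
    fun hx hy => by gcongr
  have hfst : ∀ s s', (w s).1 = (w s').1 → (p s).1 = (p s').1 ∧ (q s).1 = (q s').1 := by
    intro s s' h
    simp only [hw] at h
    rcases le_total (τ s) (τ s') with hτ | hτ
    · exact eq_and_eq_of_mul_add_mul_eq ha hb (hp.fst_le_of_le _ _ hτ)
        (hq.fst_le_of_le _ _ hτ) h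
    · obtain ⟨h₁, h₂⟩ := eq_and_eq_of_mul_add_mul_eq ha hb (hp.fst_le_of_le _ _ hτ)
        (hq.fst_le_of_le _ _ hτ) h.symm
      exact ⟨h₁.symm, h₂.symm⟩
  have hsnd : ∀ s s', (w s).1 = (w s').1 → (p s).2 < (p s').2 → (w s).2 < (w s').2 :=
    fun s s' h hpy => by
      obtain ⟨hpx, hqx⟩ := hfst s s' h
      simpa only [hw] using hlt hpy (hp.snd_lt_of_snd_lt hσ hq hpx hqx hpy)
  have hsnd_iff : ∀ s s', (w s).1 = (w s').1 → ((w s).2 < (w s').2 ↔ (p s).2 < (p s').2) := by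
    refine fun s s' h => ⟨fun hwy => ?_, hsnd s s' h⟩
    rcases lt_trichotomy (p s).2 (p s').2 with hpy | hpy | hpy
    · exact hpy
    · cases hp.injective (Prod.ext (hfst s s' h).1 hpy)
      exact hwy.false.elim
    · exact absurd (hsnd s' s h.symm hpy) hwy.asymm
  refine ⟨fun s s' h => ?_, fun s s' hne hint => ?_, fun s s' hx hy => ?_,
    fun s s' h => ?_, fun s s' h hrs hne => ?_⟩
  · by_contra hne
    have hx : (w s).1 = (w s').1 := congrArg Prod.fst h
    have hpy : (p s).2 ≠ (p s').2 := fun hpy => hne (hp.injective (Prod.ext (hfst s s' hx).1 hpy))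
    rcases hpy.lt_or_gt with hpy | hpy
    exacts [(hsnd s s' hx hpy).ne (congrArg Prod.snd h),
      (hsnd s' s hx.symm hpy).ne (congrArg Prod.snd h).symm]
  · simpa only [hw] using hlt (hp.condC1 s s' hne hint) (hq.condC1 s s' hne hint)
  · exact hp.precedes_of_snd_lt s s' (hfst s s' hx).1 ((hsnd_iff s s' hx).1 hy)
  · simpa only [hw] using hle (hp.fst_le_of_le s s' h) (hq.fst_le_of_le s s' h)
  · simpa only [hw] using hlt (hp.snd_lt_of_rel s s' h hrs hne) (hq.snd_lt_of_rel s s' h hrs hne)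

theorem convex_Phi [Fintype S] (hσ : Surjective σ) (hτ : Surjective τ) :
    Convex ℝ (Phi r τ σ) := by
  refine convex_iff_forall_pos.2 fun p hp q hq a b ha hb _ => ?_
  rw [mem_Phi_iff hτ] at hp hq ⊢
  exact hp.smul_add_smul hσ hq ha hb

end Convexity

section Anchor

variable {m n : ℕ}

theorem mem_FNcell_of_strictMono {S : Type*} [LinearOrder S] {τ : S → Fin n}
    {p : S → ℝ × ℝ} (hx : ∀ s, (p s).1 = (τ s : ℕ)) (hy : StrictMono fun s => (p s).2) :
    p ∈ FNcell (· ≤ ·) τ := by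
  refine ⟨fun s s' h => hy.injective (congrArg Prod.snd h), fun s s' h => ?_,
    fun s s' h hle hne => ⟨by rw [hx, hx, h], hy (hle.lt_of_ne hne)⟩⟩
  rw [hx, hx]
  exact_mod_cast h

def pinned (m l : ℕ) : Set (Fin m → ℝ × ℝ) :=
  {p | ∀ i : Fin m, (i : ℕ) < l → (p i).2 = (i : ℕ) + 1}

theorem convex_pinned (l : ℕ) : Convex ℝ (pinned m l) := by
  intro p hp q hq a b _ _ hab i hi
  simp only [Pi.add_apply, Pi.smul_apply, Prod.snd_add, Prod.smul_snd, smul_eq_mul, hp i hi,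
    hq i hi]
  linear_combination ((i : ℕ) + 1 : ℝ) * hab

theorem pinned_antitone : Antitone (pinned m) :=
  fun _ _ hll' _ hp i hi => hp i (hi.trans_le hll')

theorem pinned_succ {l : ℕ} (hl : l < m) : pinned m (l + 1) =
    pinned m l ∩ {p | ((ContinuousLinearMap.snd ℝ ℝ ℝ).comp
      (ContinuousLinearMap.proj ⟨l, hl⟩)) p = l + 1} := by
  ext p
  simp only [pinned, Set.mem_inter_iff, ContinuousLinearMap.comp_apply,
    ContinuousLinearMap.proj_apply, ContinuousLinearMap.coe_snd', Nat.lt_succ_iff_lt_or_eq]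
  refine ⟨fun h => ⟨fun i hi => h i (Or.inl hi), h _ (Or.inr rfl)⟩, ?_⟩
  rintro ⟨h, hl'⟩ i (hi | rfl)
  exacts [h i hi, hl']

def anchor (τ : Fin m → Fin n) (l : ℕ) (d : ℝ) (s : Fin m) : ℝ × ℝ :=
  ((τ s : ℕ), (s : ℕ) + 1 + if l ≤ (s : ℕ) then d else 0)

theorem anchor_mem_FNcell (τ : Fin m → Fin n) (l : ℕ) {d : ℝ} (hd : -1 < d) :
    anchor τ l d ∈ FNcell (· ≤ ·) τ := by
  refine mem_FNcell_of_strictMono (fun _ => rfl) fun s s' hss => ?_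
  have hss' : (s : ℕ) + 1 ≤ s' := hss
  have hss'' : ((s : ℕ) : ℝ) + 1 ≤ (s' : ℕ) := by exact_mod_cast hss'
  dsimp only [anchor]
  split_ifs <;> linarith

theorem anchor_mem_pinned (τ : Fin m → Fin n) (l : ℕ) (d : ℝ) : anchor τ l d ∈ pinned m l :=
  fun i hi => by simp [anchor, not_le.2 hi]

theorem anchor_self {l : ℕ} (hl : l < m) (τ : Fin m → Fin n) (d : ℝ) :
    (anchor τ l d ⟨l, hl⟩).2 = l + 1 + d := by
  simp [anchor]

end Anchor

theorem retractsOnto_Phi_inter_pinned_succ {m n k l : ℕ} {τ : Fin m → Fin n}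
    {σ : Fin k → Fin m} (hσ : Surjective σ) (htree : IsPruned2Tree (· ≤ ·) τ)
    (hτσ : MemDtree (· ≤ ·) τ σ) (hl : l < m) :
    RetractsOnto (Phi (· ≤ ·) τ σ ∩ pinned m l) (Phi (· ≤ ·) τ σ ∩ pinned m (l + 1)) := by
  have hanchor : ∀ d : ℝ, -1 < d → anchor τ l d ∈ Phi (· ≤ ·) τ σ ∩ pinned m l := fun d hd =>
    ⟨mem_Phi_of_mem_FNcell htree hτσ (anchor_mem_FNcell τ l hd), anchor_mem_pinned τ l d⟩
  rw [pinned_succ hl, ← Set.inter_assoc]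
  refine ((convex_Phi hσ htree.2.1).inter (convex_pinned l)).retractsOnto_inter_level _
    (hanchor (-1 / 2) (by norm_num)) ?_ (hanchor (1 / 2) (by norm_num)) ?_
  all_goals
    simp only [ContinuousLinearMap.comp_apply, ContinuousLinearMap.proj_apply,
      ContinuousLinearMap.coe_snd', anchor_self]
    norm_num

theorem statement9_general (m k n : ℕ)
    (τ : Fin m → Fin n)
    (htree : IsPruned2Tree (fun a b : Fin m => a ≤ b) τ)
    (σ : Fin k → Fin m) (hσ : MemD σ)
    (hτσ : MemDtree (fun a b : Fin m => a ≤ b) τ σ) :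
    let F : ℕ → Set (Fin m → ℝ × ℝ) := fun l =>
      {p ∈ Phi (fun a b : Fin m => a ≤ b) τ σ |
        ∀ i : Fin m, (i : ℕ) < l → (p i).2 = (i : ℕ) + 1}
    (∀ l < m, IsDefRetract (F (l + 1)) (F l)) ∧ IsDefRetract (F m) (F 0) := by
  intro F
  have hF : ∀ l, F l = Phi (· ≤ ·) τ σ ∩ pinned m l := fun _ => rfl
  have hconvex : ∀ l, Convex ℝ (F l) := fun l =>
    hF l ▸ (convex_Phi hσ.1 htree.2.1).inter (convex_pinned l)
  have hanti : Antitone F := fun l l' h => by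
    rw [hF, hF]
    exact Set.inter_subset_inter_right _ (pinned_antitone h)
  have hstep : ∀ l < m, RetractsOnto (F l) (F (l + 1)) := fun l hl => by
    rw [hF, hF]
    exact retractsOnto_Phi_inter_pinned_succ hσ.1 htree hτσ hl
  have hall : ∀ j ≤ m, RetractsOnto (F 0) (F j) := by
    intro j hj
    induction j with
    | zero => exact RetractsOnto.refl _
    | succ j ih => exact (ih (by omega)).trans (hstep j hj) (hanti j.le_succ)
  exact ⟨fun l hl => (hconvex l).isDefRetract_of_retractsOnto (hanti l.le_succ) (hstep l hl),
    (hconvex 0).isDefRetract_of_retractsOnto (hanti m.zero_le) (hall m le_rfl)⟩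

/-- With `S = Fin m` (identified with `{1, …, m}` via `≤₁`, taken to
be the standard order), a pruned 2-tree `(≤, τ)` with `σ ∈ D(τ, N)`, and
`F_l = {p ∈ Φ_σ(τ) : y_i = i for all i ≤ l}`, each `F_{l+1}` is a deformation
retract of `F_l` (`0 ≤ l ≤ m − 1`); consequently `F_m` is a deformation retract of
`Φ_σ(τ) = F_0`. -/
theorem statement9 (m N k n : ℕ) (hk : k = N + m)
    (τ : Fin m → Fin n)
    (htree : IsPruned2Tree (fun a b : Fin m => a ≤ b) τ)
    (σ : Fin k → Fin m) (hσ : MemD σ)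
    (hτσ : MemDtree (fun a b : Fin m => a ≤ b) τ σ) :
    let F : ℕ → Set (Fin m → ℝ × ℝ) := fun l =>
      {p ∈ Phi (fun a b : Fin m => a ≤ b) τ σ |
        ∀ i : Fin m, (i : ℕ) < l → (p i).2 = (i : ℕ) + 1}
    (∀ l < m, IsDefRetract (F (l + 1)) (F l)) ∧ IsDefRetract (F m) (F 0) :=
  statement9_general m k n τ htree σ hσ hτσ
end

section
/- Let S = S_c ⊔ S_a be an SC set with m = |S|, N ≥ 0, and let σ ∈ D(S, N) satisfy condition (III). Let X_σ ⊆ Conf(S) be the set of configurations satisfying conditions (C1), (C2) and (C3), and identify S with {1, …, m} via the linear order <_σ. Set Y_0 = X_σ, and for 1 ≤ k ≤ m let Y_k = {p ∈ X_σ : y_s = y_1 + s − 1 for all s ≤ k, and min(y_{k+1}, …, y_m) = y_k + 1 (this last condition being vacuous when k = m)}; for 0 ≤ k ≤ m − 1 let Z_k = {p ∈ Y_k : y_{k+1} = min(y_{k+1}, …, y_m)}. Then for every 0 ≤ k ≤ m − 1, Z_k is a deformation retract of Y_k, and Y_{k+1} is a deformation retract of Z_k. -/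
/-- The relation `<_σ` on `S`: `s <_σ s'` iff `s ≠ s'` and either some element of
`σ⁻¹(s)` lies strictly between two elements of `σ⁻¹(s')`, or every element of
`σ⁻¹(s)` is smaller than every element of `σ⁻¹(s')`. -/
def LtSigma {S : Type*} {k : ℕ} (σ : Fin k → S) (s s' : S) : Prop :=
  s ≠ s' ∧
  ((∃ i j₁ j₂ : Fin k, σ i = s ∧ σ j₁ = s' ∧ σ j₂ = s' ∧ j₁ < i ∧ i < j₂) ∨
   (∀ i j : Fin k, σ i = s → σ j = s' → i < j))

/-! Both deformations are straight-line homotopies `p ↦ p + t • (r p - p)` to a retraction `r`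
that moves only `y`-coordinates: on `Y_k` it lowers `y_{k+1}` to `μ = min (y_{k+1}, …, y_m)`,
on `Z_k` it translates the points `k + 2, …, m` vertically until their minimum is `y_{k+1} + 1`.
As `<_σ` is the order of `S`, injectivity and (C1)–(C3) say that the `x`-coordinates satisfy
(C1) and (C3) and that points with equal `x`-coordinate have `y`-coordinates increasing along
`<_σ`. The homotopies fix the `x`-coordinates, so only this monotonicity has to be kept. Along
the first one, `y_{k+1}` decreases but stays at least `μ`, which exceeds `y_1, …, y_k` (these
are at most `y_k = μ - 1`). Along the second one, the moved points keep their mutual order and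
each height `y_s + t c` stays at least `min (y_s, y_{k+1} + 1)`, above `y_1, …, y_{k+1}`. -/

open Set

theorem isDefRetract_of_lineMap {E : Type*} [TopologicalSpace E] [AddCommGroup E] [Module ℝ E]
    [IsTopologicalAddGroup E] [ContinuousSMul ℝ E] {A X : Set E} (r : E → E) (hr : Continuous r)
    (hAX : A ⊆ X) (hX : ∀ p ∈ X, ∀ t ∈ Icc (0 : ℝ) 1, AffineMap.lineMap p (r p) t ∈ X)
    (hrA : ∀ p ∈ X, r p ∈ A) (hfix : ∀ a ∈ A, r a = a) : IsDefRetract A X := by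
  refine ⟨hAX, ⟨fun q => ⟨AffineMap.lineMap q.1.1 (r q.1.1) (q.2 : ℝ), hX _ q.1.2 _ q.2.2⟩, ?_⟩,
    fun p => ?_, fun p => ?_, fun p t hp => ?_⟩
  · exact ((continuous_subtype_val.comp continuous_fst).lineMap
      (hr.comp (continuous_subtype_val.comp continuous_fst))
      (continuous_subtype_val.comp continuous_snd)).subtype_mk _
  · exact Subtype.ext (AffineMap.lineMap_apply_zero _ _)
  · simpa using hrA p p.2
  · exact Subtype.ext (by simp [hfix p hp])

section ShiftSnd

variable {S : Type*}

def shiftSnd (δ : S → ℝ) (p : S → ℝ × ℝ) : S → ℝ × ℝ := fun s => ((p s).1, (p s).2 + δ s)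

@[simp]
lemma shiftSnd_apply (δ : S → ℝ) (p : S → ℝ × ℝ) (s : S) :
    shiftSnd δ p s = ((p s).1, (p s).2 + δ s) := rfl

@[simp]
lemma shiftSnd_zero (p : S → ℝ × ℝ) : shiftSnd 0 p = p := by
  ext s <;> simp

lemma lineMap_shiftSnd (δ : S → ℝ) (p : S → ℝ × ℝ) (t : ℝ) :
    AffineMap.lineMap p (shiftSnd δ p) t = shiftSnd (t • δ) p := by
  ext s <;> simp [AffineMap.lineMap_apply_module', add_comm]

lemma continuous_shiftSnd {δ : (S → ℝ × ℝ) → S → ℝ} (hδ : Continuous δ) :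
    Continuous fun p => shiftSnd (δ p) p :=
  continuous_pi fun s => ((continuous_apply s).fst).prodMk
    (((continuous_apply s).snd).add ((continuous_apply s).comp hδ))

end ShiftSnd

section Configurations

variable {S : Type*} [LinearOrder S] {k : ℕ} {σ : Fin k → S} {Sa : Set S}

def Xset (Sa : Set S) (σ : Fin k → S) : Set (S → ℝ × ℝ) :=
  {p | Function.Injective p ∧ CondC1 σ p ∧ CondC2 σ p ∧ CondC3 Sa p}

lemma snd_lt_snd_of_mem_Xset (hid : ∀ s s' : S, LtSigma σ s s' ↔ s < s')
    {p : S → ℝ × ℝ} (hp : p ∈ Xset Sa σ) {s s' : S} (hss : s < s')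
    (hx : (p s).1 = (p s').1) : (p s).2 < (p s').2 := by
  obtain ⟨-, hC1, hC2, -⟩ := hp
  obtain ⟨hne, hbetween | hbefore⟩ := (hid s s').mpr hss
  · exact absurd hx (hC1 s s' hne hbetween).ne
  · exact hC2 s s' hne hx hbefore

lemma shiftSnd_mem_Xset (hid : ∀ s s' : S, LtSigma σ s s' ↔ s < s')
    {p : S → ℝ × ℝ} (hp : p ∈ Xset Sa σ) {δ : S → ℝ}
    (hδ : ∀ s s', s < s' → (p s).1 = (p s').1 → (p s).2 + δ s < (p s').2 + δ s') :
    shiftSnd δ p ∈ Xset Sa σ := by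
  obtain ⟨-, hC1, -, hC3⟩ := hp
  refine ⟨fun s s' h => ?_, hC1, fun s s' hne hx hbefore => ?_, hC3⟩
  · simp only [shiftSnd_apply, Prod.mk.injEq] at h
    by_contra hne
    rcases lt_or_gt_of_ne hne with hlt | hlt
    · exact (hδ s s' hlt h.1).ne h.2
    · exact (hδ s' s hlt h.1.symm).ne h.2.symm
  · exact hδ s s' ((hid s s').mp ⟨hne, Or.inr hbefore⟩) hx

end Configurations

section Tail

variable {m : ℕ}

def tailSnd (a : ℕ) (p : Fin m → ℝ × ℝ) : Set ℝ := {v | ∃ s : Fin m, a ≤ (s : ℕ) ∧ (p s).2 = v}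

noncomputable def tailMin (a : ℕ) (ha : a < m) (p : Fin m → ℝ × ℝ) : ℝ :=
  (Finset.univ.filter fun s : Fin m => a ≤ (s : ℕ)).inf' ⟨⟨a, ha⟩, by simp⟩ fun s => (p s).2

lemma isLeast_tailMin {a : ℕ} (ha : a < m) (p : Fin m → ℝ × ℝ) :
    IsLeast (tailSnd a p) (tailMin a ha p) := by
  refine ⟨?_, ?_⟩
  · obtain ⟨s, hs, h⟩ := Finset.exists_mem_eq_inf' _ fun s : Fin m => (p s).2
    exact ⟨s, by simpa using hs, h.symm⟩
  · rintro v ⟨s, hs, rfl⟩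
    exact Finset.inf'_le _ (by simpa using hs)

lemma continuous_tailMin {a : ℕ} (ha : a < m) : Continuous (tailMin a ha) :=
  Continuous.finset_inf'_apply _ fun s _ => (continuous_apply s).snd

lemma IsLeast.tailSnd_of_mem_Icc {a : ℕ} {p q : Fin m → ℝ × ℝ} {μ : ℝ}
    (h : IsLeast (tailSnd a p) μ) (hq : ∀ s : Fin m, a ≤ (s : ℕ) → (q s).2 ∈ Icc μ (p s).2) :
    IsLeast (tailSnd a q) μ := by
  obtain ⟨⟨s, hs, hμ⟩, hlow⟩ := h
  refine ⟨⟨s, hs, le_antisymm ?_ (hq s hs).1⟩, ?_⟩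
  · exact hμ ▸ (hq s hs).2
  · rintro v ⟨s', hs', rfl⟩
    exact (hq s' hs').1

lemma IsLeast.tailSnd_shiftSnd {a : ℕ} {p : Fin m → ℝ × ℝ} {μ c : ℝ} {δ : Fin m → ℝ}
    (h : IsLeast (tailSnd a p) μ) (hδ : ∀ s : Fin m, a ≤ (s : ℕ) → δ s = c) :
    IsLeast (tailSnd a (shiftSnd δ p)) (μ + c) := by
  obtain ⟨⟨s, hs, rfl⟩, hlow⟩ := h
  refine ⟨⟨s, hs, by simp [hδ s hs]⟩, ?_⟩
  rintro v ⟨s', hs', rfl⟩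
  simpa only [shiftSnd_apply, hδ s' hs', add_le_add_iff_right] using hlow ⟨s', hs', rfl⟩

end Tail

section Stages

variable {m k : ℕ} {Sa : Set (Fin m)} {σ : Fin k → Fin m}

/-- The paper's `Y_a` (and `Z_a` below); its point `s` is `s - 1 : Fin m` here. -/
def Yset (Sa : Set (Fin m)) (σ : Fin k → Fin m) (hm : 0 < m) (a : ℕ) :
    Set (Fin m → ℝ × ℝ) :=
  if a = 0 then Xset Sa σ else
    {p ∈ Xset Sa σ |
      (∀ s : Fin m, (s : ℕ) < a → (p s).2 = (p ⟨0, hm⟩).2 + (s : ℕ)) ∧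
      (∀ ham : a < m,
        IsLeast (tailSnd a p) ((p ⟨a - 1, Nat.lt_of_le_of_lt (Nat.sub_le a 1) ham⟩).2 + 1))}

def Zset (Sa : Set (Fin m)) (σ : Fin k → Fin m) (hm : 0 < m) (a : ℕ) :
    Set (Fin m → ℝ × ℝ) :=
  {p ∈ Yset Sa σ hm a | ∀ ham : a < m, IsLeast (tailSnd a p) ((p ⟨a, ham⟩).2)}

variable {hm : 0 < m} {p : Fin m → ℝ × ℝ}

lemma mem_Yset_iff {a : ℕ} :
    p ∈ Yset Sa σ hm a ↔ p ∈ Xset Sa σ ∧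
      (∀ s : Fin m, (s : ℕ) < a → (p s).2 = (p ⟨0, hm⟩).2 + (s : ℕ)) ∧
      (a < m → 0 < a → IsLeast (tailSnd a p) ((p ⟨0, hm⟩).2 + a)) := by
  rcases Nat.eq_zero_or_pos a with rfl | ha₀
  · simp [Yset]
  have hstep : ∀ ha : a < m, (∀ s : Fin m, (s : ℕ) < a → (p s).2 = (p ⟨0, hm⟩).2 + (s : ℕ)) →
      (p ⟨a - 1, Nat.lt_of_le_of_lt (Nat.sub_le a 1) ha⟩).2 + 1 = (p ⟨0, hm⟩).2 + a := by
    intro ha hstair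
    rw [hstair _ (by simp only; omega), Nat.cast_sub (by omega)]
    push_cast
    ring
  simp only [Yset, if_neg ha₀.ne', mem_ofPred_eq]
  refine and_congr_right fun _ => ⟨fun ⟨hstair, hmin⟩ => ⟨hstair, fun ha _ => ?_⟩,
    fun ⟨hstair, hmin⟩ => ⟨hstair, fun ha => ?_⟩⟩
  · exact hstep ha hstair ▸ hmin ha
  · exact (hstep ha hstair).symm ▸ hmin ha ha₀

lemma mem_Zset_iff {l : ℕ} (hl : l < m) :
    p ∈ Zset Sa σ hm l ↔ p ∈ Xset Sa σ ∧
      (∀ s : Fin m, (s : ℕ) ≤ l → (p s).2 = (p ⟨0, hm⟩).2 + (s : ℕ)) ∧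
      IsLeast (tailSnd l p) (p ⟨l, hl⟩).2 := by
  simp only [Zset, mem_ofPred_eq, mem_Yset_iff]
  constructor
  · rintro ⟨⟨hX, hstair, hmin⟩, hZ⟩
    refine ⟨hX, fun s hs => ?_, hZ hl⟩
    rcases hs.lt_or_eq with hs | hs
    · exact hstair s hs
    obtain rfl : s = ⟨l, hl⟩ := Fin.ext hs
    rcases Nat.eq_zero_or_pos l with rfl | hl₀
    · simp
    · exact (hmin hl hl₀).unique (hZ hl) |>.symm
  · rintro ⟨hX, hstair, hmin⟩
    exact ⟨⟨hX, fun s hs => hstair s hs.le, fun _ _ => hstair ⟨l, hl⟩ le_rfl ▸ hmin⟩,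
      fun _ => hmin⟩

lemma snd_lt_tailMin_of_mem_Yset {l : ℕ} (hl : l < m) (hp : p ∈ Yset Sa σ hm l)
    {s : Fin m} (hs : (s : ℕ) < l) : (p s).2 < tailMin l hl p := by
  obtain ⟨-, hstair, hmin⟩ := mem_Yset_iff.mp hp
  rw [(isLeast_tailMin hl p).unique (hmin hl (by omega)), hstair s hs]
  exact add_lt_add_right (by exact_mod_cast hs) _

lemma Yset_succ_subset_Zset {l : ℕ} (hl : l < m) :
    Yset Sa σ hm (l + 1) ⊆ Zset Sa σ hm l := by
  intro p hp
  obtain ⟨hX, hstair, hmin⟩ := mem_Yset_iff.mp hp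
  have hL : (p ⟨l, hl⟩).2 = (p ⟨0, hm⟩).2 + l := hstair ⟨l, hl⟩ l.lt_succ_self
  refine (mem_Zset_iff hl).mpr ⟨hX, fun s hs => hstair s (Nat.lt_succ_of_le hs),
    ⟨⟨l, hl⟩, le_rfl, rfl⟩, ?_⟩
  rintro v ⟨s, hs, rfl⟩
  rcases hs.lt_or_eq with hs | hs
  · have := (hmin (by omega) l.succ_pos).2 ⟨s, hs, rfl⟩
    push_cast at this
    linarith
  · exact (congrArg (fun s => (p s).2) (Fin.ext hs : (⟨l, hl⟩ : Fin m) = s)).le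

end Stages

section LowerToTailMin

variable {m k : ℕ} {Sa : Set (Fin m)} {σ : Fin k → Fin m} {hm : 0 < m} {l : ℕ}
  {p : Fin m → ℝ × ℝ}

lemma isLeast_tailSnd_shiftSnd_single (hl : l < m) {c : ℝ} (hc : tailMin l hl p ≤ (p ⟨l, hl⟩).2 + c)
    (hc₀ : c ≤ 0) :
    IsLeast (tailSnd l (shiftSnd (Pi.single ⟨l, hl⟩ c) p)) (tailMin l hl p) := by
  refine (isLeast_tailMin hl p).tailSnd_of_mem_Icc fun s hs => ?_
  rcases eq_or_ne s ⟨l, hl⟩ with rfl | hsL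
  · simpa using ⟨hc, hc₀⟩
  · simpa [Pi.single_eq_of_ne hsL] using (isLeast_tailMin hl p).2 ⟨s, hs, rfl⟩

lemma shiftSnd_single_mem_Yset (hl : l < m) (hid : ∀ s s' : Fin m, LtSigma σ s s' ↔ s < s')
    (hp : p ∈ Yset Sa σ hm l) {c : ℝ} (hc : tailMin l hl p ≤ (p ⟨l, hl⟩).2 + c)
    (hc₀ : c ≤ 0) : shiftSnd (Pi.single ⟨l, hl⟩ c) p ∈ Yset Sa σ hm l := by
  have hfix : ∀ s : Fin m, (s : ℕ) < l → shiftSnd (Pi.single ⟨l, hl⟩ c) p s = p s :=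
    fun s hs => by simp [Pi.single_eq_of_ne (ne_of_lt (show s < ⟨l, hl⟩ from hs))]
  obtain ⟨hX, hstair, hmin⟩ := mem_Yset_iff.mp hp
  refine mem_Yset_iff.mpr ⟨shiftSnd_mem_Xset hid hX fun s s' hss hx => ?_, fun s hs => ?_,
    fun _ hl₀ => ?_⟩
  · have hlt := snd_lt_snd_of_mem_Xset hid hX hss hx
    rcases eq_or_ne s ⟨l, hl⟩ with rfl | hsL
    · simp only [Pi.single_eq_same, Pi.single_eq_of_ne hss.ne']
      linarith
    rcases eq_or_ne s' ⟨l, hl⟩ with rfl | hs'L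
    · simp only [Pi.single_eq_same, Pi.single_eq_of_ne hsL]
      linarith [snd_lt_tailMin_of_mem_Yset hl hp hss]
    · simpa [Pi.single_eq_of_ne hsL, Pi.single_eq_of_ne hs'L] using hlt
  · rw [hfix s hs, hfix ⟨0, hm⟩ (by simp only; omega)]
    exact hstair s hs
  · rw [hfix ⟨0, hm⟩ hl₀, ← (isLeast_tailMin hl p).unique (hmin hl hl₀)]
    exact isLeast_tailSnd_shiftSnd_single hl hc hc₀

theorem isDefRetract_Zset_Yset (hl : l < m) (hid : ∀ s s' : Fin m, LtSigma σ s s' ↔ s < s') :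
    IsDefRetract (Zset Sa σ hm l) (Yset Sa σ hm l) := by
  have hmin_le : ∀ p : Fin m → ℝ × ℝ, tailMin l hl p ≤ (p ⟨l, hl⟩).2 :=
    fun p => (isLeast_tailMin hl p).2 ⟨⟨l, hl⟩, le_rfl, rfl⟩
  refine isDefRetract_of_lineMap
    (fun p => shiftSnd (Pi.single ⟨l, hl⟩ (tailMin l hl p - (p ⟨l, hl⟩).2)) p)
    (continuous_shiftSnd ((continuous_single (⟨l, hl⟩ : Fin m)).comp ((continuous_tailMin hl).sub
      (continuous_apply (⟨l, hl⟩ : Fin m)).snd))) (fun _ hp => hp.1) (fun p hp t ⟨ht₀, ht₁⟩ => ?_)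
    (fun p hp => ⟨?_, fun _ => ?_⟩) (fun p hp => ?_)
  · rw [lineMap_shiftSnd, ← Pi.single_smul]
    have := hmin_le p
    exact shiftSnd_single_mem_Yset hl hid hp (by simp only [smul_eq_mul]; nlinarith)
      (by simp only [smul_eq_mul]; nlinarith)
  · exact shiftSnd_single_mem_Yset hl hid hp (add_sub_cancel _ _).ge (by linarith [hmin_le p])
  · simpa using isLeast_tailSnd_shiftSnd_single hl (add_sub_cancel _ _).ge
      (by linarith [hmin_le p])
  · simp [(isLeast_tailMin hl p).unique (hp.2 hl)]

end LowerToTailMin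

section AlignTail

variable {m k : ℕ} {Sa : Set (Fin m)} {σ : Fin k → Fin m} {hm : 0 < m} {l : ℕ}
  {p : Fin m → ℝ × ℝ}

def tailShift (l : ℕ) (c : ℝ) : Fin m → ℝ := fun s => if l < (s : ℕ) then c else 0

lemma smul_tailShift (t c : ℝ) : t • tailShift (m := m) l c = tailShift l (t * c) := by
  ext s
  simp only [tailShift, Pi.smul_apply, smul_eq_mul, mul_ite, mul_zero]

@[simp]
lemma tailShift_zero : tailShift (m := m) l 0 = 0 := by
  ext s
  simp [tailShift]

noncomputable def tailGap (l : ℕ) (p : Fin m → ℝ × ℝ) : ℝ :=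
  if h : l + 1 < m then (p ⟨l, by omega⟩).2 + 1 - tailMin (l + 1) h p else 0

lemma continuous_tailGap : Continuous (tailGap (m := m) l) := by
  unfold tailGap
  split_ifs with h
  · exact (((continuous_apply _).snd).add continuous_const).sub (continuous_tailMin h)
  · exact continuous_const

lemma shiftSnd_tailShift_mem_Zset (hl : l < m) (hid : ∀ s s' : Fin m, LtSigma σ s s' ↔ s < s')
    (hp : p ∈ Zset Sa σ hm l) {c : ℝ}
    (hc : ∀ s : Fin m, l < (s : ℕ) → min (p s).2 ((p ⟨l, hl⟩).2 + 1) ≤ (p s).2 + c) :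
    shiftSnd (tailShift l c) p ∈ Zset Sa σ hm l := by
  have hfix : ∀ s : Fin m, (s : ℕ) ≤ l → shiftSnd (tailShift l c) p s = p s :=
    fun s hs => by simp [tailShift, hs.not_gt]
  have hshift : ∀ s : Fin m, l < (s : ℕ) → (shiftSnd (tailShift l c) p s).2 = (p s).2 + c :=
    fun s hs => by simp [tailShift, hs]
  obtain ⟨hX, hstair, hmin⟩ := (mem_Zset_iff hl).mp hp
  have hbelow : ∀ s : Fin m, (s : ℕ) ≤ l → (p s).2 ≤ (p ⟨l, hl⟩).2 := fun s hs => by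
    rw [hstair s hs, hstair ⟨l, hl⟩ le_rfl]
    exact add_le_add_right (by exact_mod_cast hs) _
  refine (mem_Zset_iff hl).mpr ⟨shiftSnd_mem_Xset hid hX fun s s' hss hx => ?_,
    fun s hs => by rw [hfix s hs, hfix ⟨0, hm⟩ (Nat.zero_le l)]; exact hstair s hs, ?_⟩
  · have hlt := snd_lt_snd_of_mem_Xset hid hX hss hx
    rcases le_or_gt (s' : ℕ) l with hs' | hs'
    · have hs : (s : ℕ) ≤ l := (Fin.lt_def.mp hss).le.trans hs'
      simpa [tailShift, hs.not_gt, hs'.not_gt] using hlt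
    rcases le_or_gt (s : ℕ) l with hs | hs
    · have := hc s' hs'
      simp only [tailShift, hs.not_gt, hs', if_true, if_false, add_zero]
      exact (lt_min hlt (by linarith [hbelow s hs])).trans_le this
    · simpa [tailShift, hs, hs'] using hlt
  · rw [hfix ⟨l, hl⟩ le_rfl]
    refine ⟨⟨⟨l, hl⟩, le_rfl, by rw [hfix ⟨l, hl⟩ le_rfl]⟩, ?_⟩
    rintro v ⟨s, hs, rfl⟩
    rcases hs.lt_or_eq with hs | hs
    · rw [hshift s hs]
      exact (le_min (hmin.2 ⟨s, hs.le, rfl⟩) (by linarith)).trans (hc s hs)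
    · rw [hfix s hs.ge]
      exact (congrArg (fun s => (p s).2) (Fin.ext hs : (⟨l, hl⟩ : Fin m) = s)).le

lemma min_le_snd_add_tailGap (hl : l < m) (p : Fin m → ℝ × ℝ) {s : Fin m} (hs : l < (s : ℕ))
    {t : ℝ} (ht₀ : 0 ≤ t) (ht₁ : t ≤ 1) :
    min (p s).2 ((p ⟨l, hl⟩).2 + 1) ≤ (p s).2 + t * tailGap l p := by
  have h : l + 1 < m := lt_of_le_of_lt hs s.isLt
  have := (isLeast_tailMin h p).2 ⟨s, hs, rfl⟩
  simp only [tailGap, dif_pos h]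
  rcases le_total 0 ((p ⟨l, hl⟩).2 + 1 - tailMin (l + 1) h p) with hg | hg
  · exact (min_le_left _ _).trans (by nlinarith)
  · exact (min_le_right _ _).trans (by nlinarith)

lemma shiftSnd_tailShift_tailGap_mem_Yset_succ (hl : l < m)
    (hid : ∀ s s' : Fin m, LtSigma σ s s' ↔ s < s') (hp : p ∈ Zset Sa σ hm l) :
    shiftSnd (tailShift l (tailGap l p)) p ∈ Yset Sa σ hm (l + 1) := by
  set q := shiftSnd (tailShift l (tailGap l p)) p
  have hZ : q ∈ Zset Sa σ hm l := shiftSnd_tailShift_mem_Zset hl hid hp fun s hs => by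
    simpa using min_le_snd_add_tailGap hl p hs zero_le_one le_rfl
  obtain ⟨hX, hstair, -⟩ := (mem_Zset_iff hl).mp hZ
  refine mem_Yset_iff.mpr ⟨hX, fun s hs => hstair s (Nat.le_of_lt_succ hs), fun h _ => ?_⟩
  have hmin := (isLeast_tailMin h p).tailSnd_shiftSnd (δ := tailShift l (tailGap l p))
    (c := tailGap l p) fun s hs => if_pos hs
  have hqL : (q ⟨l, hl⟩).2 = (p ⟨l, hl⟩).2 := by simp [q, tailShift]
  have hval : tailMin (l + 1) h p + tailGap l p = (q ⟨0, hm⟩).2 + ↑(l + 1) := by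
    rw [tailGap, dif_pos h, Nat.cast_succ, ← add_assoc, ← hstair ⟨l, hl⟩ le_rfl, hqL]
    ring
  exact hval ▸ hmin

lemma tailGap_eq_zero_of_mem_Yset_succ (hl : l < m) (hp : p ∈ Yset Sa σ hm (l + 1)) :
    tailGap l p = 0 := by
  obtain ⟨-, hstair, hmin⟩ := mem_Yset_iff.mp hp
  unfold tailGap
  split_ifs with h
  · rw [(isLeast_tailMin h p).unique (hmin h l.succ_pos), hstair ⟨l, hl⟩ l.lt_succ_self]
    push_cast
    ring
  · rfl

theorem isDefRetract_Yset_succ_Zset (hl : l < m)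
    (hid : ∀ s s' : Fin m, LtSigma σ s s' ↔ s < s') :
    IsDefRetract (Yset Sa σ hm (l + 1)) (Zset Sa σ hm l) := by
  refine isDefRetract_of_lineMap (fun p => shiftSnd (tailShift l (tailGap l p)) p)
    (continuous_shiftSnd (continuous_pi fun s => ?_)) (Yset_succ_subset_Zset hl)
    (fun p hp t ⟨ht₀, ht₁⟩ => ?_) (fun p hp => shiftSnd_tailShift_tailGap_mem_Yset_succ hl hid hp)
    (fun p hp => by simp [tailGap_eq_zero_of_mem_Yset_succ hl hp])
  · unfold tailShift
    split_ifs
    exacts [continuous_tailGap, continuous_const]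
  · rw [lineMap_shiftSnd, smul_tailShift]
    exact shiftSnd_tailShift_mem_Zset hl hid hp fun s hs => min_le_snd_add_tailGap hl p hs ht₀ ht₁

end AlignTail

theorem statement10_general (m k : ℕ) (Sa : Set (Fin m)) (σ : Fin k → Fin m)
    (hid : ∀ s s' : Fin m, LtSigma σ s s' ↔ s < s') :
    ∀ l : ℕ, ∀ hl : l < m,
      (let Xσ : Set (Fin m → ℝ × ℝ) :=
        {p | Function.Injective p ∧ CondC1 σ p ∧ CondC2 σ p ∧ CondC3 Sa p}
      let y1 : (Fin m → ℝ × ℝ) → ℝ :=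
        fun p => (p ⟨0, Nat.lt_of_le_of_lt (Nat.zero_le l) hl⟩).2
      let Y : ℕ → Set (Fin m → ℝ × ℝ) := fun a =>
        if a = 0 then Xσ else
          {p ∈ Xσ |
            (∀ s : Fin m, (s : ℕ) < a → (p s).2 = y1 p + (s : ℕ)) ∧
            (∀ ham : a < m,
              IsLeast {v : ℝ | ∃ s : Fin m, a ≤ (s : ℕ) ∧ (p s).2 = v}
                ((p ⟨a - 1, Nat.lt_of_le_of_lt (Nat.sub_le a 1) ham⟩).2 + 1))}
      let Z : ℕ → Set (Fin m → ℝ × ℝ) := fun a =>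
        {p ∈ Y a | ∀ ham : a < m,
          IsLeast {v : ℝ | ∃ s : Fin m, a ≤ (s : ℕ) ∧ (p s).2 = v}
            ((p ⟨a, ham⟩).2)}
      IsDefRetract (Z l) (Y l) ∧ IsDefRetract (Y (l + 1)) (Z l)) := fun l hl =>
  ⟨isDefRetract_Zset_Yset (hm := l.zero_le.trans_lt hl) hl hid,
    isDefRetract_Yset_succ_Zset (hm := l.zero_le.trans_lt hl) hl hid⟩

/-- SC case, with `S` identified with `{1, …, m}` via the order
`<_σ`.  For `0 ≤ l ≤ m − 1`, `Z_l` is a deformation retract of `Y_l` and `Y_{l+1}`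
is a deformation retract of `Z_l`. -/
theorem statement10 (m N k : ℕ) (hk : k = N + m) (Sa : Set (Fin m))
    (σ : Fin k → Fin m) (hσ : MemD σ) (hIII : CondIII Sa σ)
    (hid : ∀ s s' : Fin m, LtSigma σ s s' ↔ s < s') :
    ∀ l : ℕ, ∀ hl : l < m,
      (let Xσ : Set (Fin m → ℝ × ℝ) :=
        {p | Function.Injective p ∧ CondC1 σ p ∧ CondC2 σ p ∧ CondC3 Sa p}
      let y1 : (Fin m → ℝ × ℝ) → ℝ :=
        fun p => (p ⟨0, Nat.lt_of_le_of_lt (Nat.zero_le l) hl⟩).2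
      let Y : ℕ → Set (Fin m → ℝ × ℝ) := fun a =>
        if a = 0 then Xσ else
          {p ∈ Xσ |
            (∀ s : Fin m, (s : ℕ) < a → (p s).2 = y1 p + (s : ℕ)) ∧
            (∀ ham : a < m,
              IsLeast {v : ℝ | ∃ s : Fin m, a ≤ (s : ℕ) ∧ (p s).2 = v}
                ((p ⟨a - 1, Nat.lt_of_le_of_lt (Nat.sub_le a 1) ham⟩).2 + 1))}
      let Z : ℕ → Set (Fin m → ℝ × ℝ) := fun a =>
        {p ∈ Y a | ∀ ham : a < m,
          IsLeast {v : ℝ | ∃ s : Fin m, a ≤ (s : ℕ) ∧ (p s).2 = v}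
            ((p ⟨a, ham⟩).2)}
      IsDefRetract (Z l) (Y l) ∧ IsDefRetract (Y (l + 1)) (Z l)) :=
  statement10_general m k Sa σ hid
end
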